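/- arXiv:1603.08571 — 8 statements merged into one kernel-verified Lean document; each statement's English description precedes it below -/
import Mathlib

section
/- Let u, ũ : ℝ² → ℝ be differentiable functions such that B(u,u) = B̃(ũ,u) and B(u,ũ) = B̃(ũ,ũ), and let M ≥ 0 satisfy ‖∇u(x)‖ ≤ M for almost every x ∈ ω. Then |∫_Ω a ‖∇u‖² dx − ∫_Ω ã ‖∇ũ‖² dx| ≤ |a₀ − a₁| · μ(ω)^{1/2} · (∫_ω ‖∇ũ‖² dx)^{1/2} · M. -/
/-!
Subtracting the two energy identities gives
`∫_Ω a ‖∇u‖² - ∫_Ω ã ‖∇ũ‖² = ∫_Ω (ã - a) ⟪∇ũ, ∇u⟫`, and since `ã - a` vanishes on `Ω \ ω` and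
equals `a₀ - a₁` on `ω`, this is `(a₀ - a₁) ∫_ω ⟪∇ũ, ∇u⟫`. Bounding `‖∇u‖` by `M` on `ω` leaves
`∫_ω ‖∇ũ‖`, which Cauchy–Schwarz against the constant `1` bounds by `μ(ω)^{1/2} ‖∇ũ‖_{L²(ω)}`.
-/

open MeasureTheory
open scoped RealInnerProductSpace

theorem measurable_gradient {𝕜 E : Type*} [RCLike 𝕜] [NormedAddCommGroup E]
    [InnerProductSpace 𝕜 E] [CompleteSpace E] [MeasurableSpace E] [BorelSpace E] (f : E → 𝕜) :
    Measurable (gradient f) :=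
  (InnerProductSpace.toDual 𝕜 E).symm.continuous.measurable.comp (measurable_fderiv 𝕜 f)

section

variable {α E : Type*} [MeasurableSpace α] {μ : Measure α}
  [NormedAddCommGroup E] [InnerProductSpace ℝ E]

theorem integral_sub_integral_eq_integral_sub_mul_inner {a ã : α → ℝ} {f g : α → E}
    (hã : Integrable (fun x => ã x * ⟪g x, f x⟫) μ)
    (ha : Integrable (fun x => a x * ⟪f x, g x⟫) μ)
    (hff : ∫ x, a x * ‖f x‖ ^ 2 ∂μ = ∫ x, ã x * ⟪g x, f x⟫ ∂μ)
    (hfg : ∫ x, a x * ⟪f x, g x⟫ ∂μ = ∫ x, ã x * ‖g x‖ ^ 2 ∂μ) :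
    ∫ x, a x * ‖f x‖ ^ 2 ∂μ - ∫ x, ã x * ‖g x‖ ^ 2 ∂μ
      = ∫ x, (ã x - a x) * ⟪g x, f x⟫ ∂μ := by
  rw [hff, ← hfg, ← integral_sub hã ha]
  congr 1 with x
  rw [real_inner_comm]
  ring

theorem setIntegral_sub_mul_eq_const_mul_setIntegral {Ω ω : Set α} {a ã h : α → ℝ} {c : ℝ}
    (hΩ : MeasurableSet Ω) (hω : MeasurableSet ω) (hωΩ : ω ⊆ Ω)
    (h_eq : ∀ x ∈ Ω \ ω, a x = ã x) (h_sub : ∀ x ∈ ω, ã x - a x = c) :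
    ∫ x in Ω, (ã x - a x) * h x ∂μ = c * ∫ x in ω, h x ∂μ := by
  rw [setIntegral_eq_of_subset_of_forall_sdiff_eq_zero hΩ hωΩ
    fun x hx => by rw [h_eq x hx, sub_self, zero_mul], ← integral_const_mul]
  exact setIntegral_congr_fun hω fun x hx => by rw [h_sub x hx]

theorem integral_norm_le_sqrt_mul_sqrt_integral_norm_sq {F : Type*} [NormedAddCommGroup F]
    [IsFiniteMeasure μ] {g : α → F}
    (hg : AEStronglyMeasurable g μ) (hg2 : Integrable (fun x => ‖g x‖ ^ 2) μ) :
    ∫ x, ‖g x‖ ∂μ ≤ √(μ.real Set.univ) * √(∫ x, ‖g x‖ ^ 2 ∂μ) := by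
  have hL2 : MemLp (fun x => ‖g x‖) (ENNReal.ofReal 2) μ := by
    rw [ENNReal.ofReal_ofNat, memLp_two_iff_integrable_sq hg.norm]
    exact hg2
  have := integral_mul_le_Lp_mul_Lq_of_nonneg Real.HolderConjugate.two_two
    (Filter.Eventually.of_forall fun x => norm_nonneg (g x))
    (Filter.Eventually.of_forall fun _ => zero_le_one) hL2 (memLp_const 1)
  simp only [mul_one, integral_const, smul_eq_mul, Real.rpow_two] at this
  rw [Real.sqrt_eq_rpow, Real.sqrt_eq_rpow, mul_comm]
  simpa using this

theorem abs_integral_inner_le [IsFiniteMeasure μ] {f g : α → E} {M : ℝ} (hM0 : 0 ≤ M)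
    (hf : ∀ᵐ x ∂μ, ‖f x‖ ≤ M) (hg : AEStronglyMeasurable g μ)
    (hg2 : Integrable (fun x => ‖g x‖ ^ 2) μ) :
    |∫ x, ⟪g x, f x⟫ ∂μ| ≤ √(μ.real Set.univ) * √(∫ x, ‖g x‖ ^ 2 ∂μ) * M := by
  have hg1 : Integrable (fun x => ‖g x‖) μ :=
    ((memLp_two_iff_integrable_sq hg.norm).2 hg2).integrable one_le_two
  calc |∫ x, ⟪g x, f x⟫ ∂μ| ≤ ∫ x, ‖g x‖ * M ∂μ := by
        rw [← Real.norm_eq_abs]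
        exact norm_integral_le_of_norm_le (hg1.mul_const M) <| hf.mono fun x hx =>
          (norm_inner_le_norm _ _).trans (mul_le_mul_of_nonneg_left hx (norm_nonneg _))
    _ = (∫ x, ‖g x‖ ∂μ) * M := integral_mul_const M _
    _ ≤ _ := by gcongr; exact integral_norm_le_sqrt_mul_sqrt_integral_norm_sq hg hg2

end

theorem stmt_2_general
    (Ω ω : Set (EuclideanSpace ℝ (Fin 2)))
    (hΩmeas : MeasurableSet Ω) (hΩfin : volume Ω < ⊤)
    (hωmeas : MeasurableSet ω) (hωsub : ω ⊆ Ω)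
    (a₀ a₁ : ℝ) (a atil : EuclideanSpace ℝ (Fin 2) → ℝ)
    (ha_eq : ∀ x ∈ Ω \ ω, a x = atil x)
    (ha_diff : ∀ x ∈ ω, atil x - a x = a₀ - a₁)
    (u util : EuclideanSpace ℝ (Fin 2) → ℝ)
    (M : ℝ) (hM0 : 0 ≤ M)
    (hM : ∀ᵐ x ∂volume.restrict ω, ‖gradient u x‖ ≤ M)
    (hint3 : IntegrableOn (fun x => atil x * ⟪gradient util x, gradient u x⟫) Ω)
    (hint4 : IntegrableOn (fun x => a x * ⟪gradient u x, gradient util x⟫) Ω)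
    (hint5 : IntegrableOn (fun x => ‖gradient util x‖ ^ 2) ω)
    (hB1 : (∫ x in Ω, a x * ‖gradient u x‖ ^ 2)
        = ∫ x in Ω, atil x * ⟪gradient util x, gradient u x⟫)
    (hB2 : (∫ x in Ω, a x * ⟪gradient u x, gradient util x⟫)
        = ∫ x in Ω, atil x * ‖gradient util x‖ ^ 2) :
    |(∫ x in Ω, a x * ‖gradient u x‖ ^ 2) - ∫ x in Ω, atil x * ‖gradient util x‖ ^ 2|
      ≤ |a₀ - a₁| * Real.sqrt ((volume ω).toReal)
          * Real.sqrt (∫ x in ω, ‖gradient util x‖ ^ 2) * M := by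
  have : IsFiniteMeasure (volume.restrict ω) :=
    isFiniteMeasure_restrict.2 ((measure_mono hωsub).trans_lt hΩfin).ne
  rw [integral_sub_integral_eq_integral_sub_mul_inner hint3 hint4 hB1 hB2,
    setIntegral_sub_mul_eq_const_mul_setIntegral hΩmeas hωmeas hωsub ha_eq ha_diff, abs_mul,
    mul_assoc, mul_assoc, ← mul_assoc (√_)]
  gcongr
  simpa [measureReal_restrict_apply_univ, Measure.real] using
    abs_integral_inner_le hM0 hM (measurable_gradient util).aestronglyMeasurable hint5

theorem stmt_2
    (Ω ω : Set (EuclideanSpace ℝ (Fin 2)))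
    (hΩmeas : MeasurableSet Ω) (hΩfin : volume Ω < ⊤)
    (hωmeas : MeasurableSet ω) (hωsub : ω ⊆ Ω)
    (a₀ a₁ : ℝ) (a atil : EuclideanSpace ℝ (Fin 2) → ℝ)
    (hameas : Measurable a) (hatilmeas : Measurable atil)
    (ha_eq : ∀ x ∈ Ω \ ω, a x = atil x)
    (ha_diff : ∀ x ∈ ω, atil x - a x = a₀ - a₁)
    (u util : EuclideanSpace ℝ (Fin 2) → ℝ)
    (hu : Differentiable ℝ u) (hutil : Differentiable ℝ util)
    (M : ℝ) (hM0 : 0 ≤ M)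
    (hM : ∀ᵐ x ∂volume.restrict ω, ‖gradient u x‖ ≤ M)
    (hint1 : IntegrableOn (fun x => a x * ‖gradient u x‖ ^ 2) Ω)
    (hint2 : IntegrableOn (fun x => atil x * ‖gradient util x‖ ^ 2) Ω)
    (hint3 : IntegrableOn (fun x => atil x * ⟪gradient util x, gradient u x⟫) Ω)
    (hint4 : IntegrableOn (fun x => a x * ⟪gradient u x, gradient util x⟫) Ω)
    (hint5 : IntegrableOn (fun x => ‖gradient util x‖ ^ 2) ω)
    (hB1 : (∫ x in Ω, a x * ‖gradient u x‖ ^ 2)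
        = ∫ x in Ω, atil x * ⟪gradient util x, gradient u x⟫)
    (hB2 : (∫ x in Ω, a x * ⟪gradient u x, gradient util x⟫)
        = ∫ x in Ω, atil x * ‖gradient util x‖ ^ 2) :
    |(∫ x in Ω, a x * ‖gradient u x‖ ^ 2) - ∫ x in Ω, atil x * ‖gradient util x‖ ^ 2|
      ≤ |a₀ - a₁| * Real.sqrt ((volume ω).toReal)
          * Real.sqrt (∫ x in ω, ‖gradient util x‖ ^ 2) * M :=
  stmt_2_general Ω ω hΩmeas hΩfin hωmeas hωsub a₀ a₁ a atil ha_eq ha_diff u util M hM0 hM hint3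
    hint4 hint5 hB1 hB2
end

section
/- Let u, ũ : ℝ² → ℝ be differentiable functions such that B(u,u) = B̃(ũ,u) and B(u,ũ) = B̃(ũ,ũ). Then ∫_Ω ã ‖∇u − ∇ũ‖² dx ≤ |a₀ − a₁| · ∫_ω ‖∇u‖² dx + |∫_Ω a ‖∇u‖² dx − ∫_Ω ã ‖∇ũ‖² dx|. -/
open MeasureTheory
open scoped RealInnerProductSpace

theorem stmt_3
    (Ω ω : Set (EuclideanSpace ℝ (Fin 2)))
    (hΩmeas : MeasurableSet Ω) (hΩfin : volume Ω < ⊤)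
    (hωmeas : MeasurableSet ω) (hωsub : ω ⊆ Ω)
    (a₀ a₁ : ℝ) (a atil : EuclideanSpace ℝ (Fin 2) → ℝ)
    (hameas : Measurable a) (hatilmeas : Measurable atil)
    (ha_eq : ∀ x ∈ Ω \ ω, a x = atil x)
    (ha_diff : ∀ x ∈ ω, atil x - a x = a₀ - a₁)
    (u util : EuclideanSpace ℝ (Fin 2) → ℝ)
    (hu : Differentiable ℝ u) (hutil : Differentiable ℝ util)
    (hint1 : IntegrableOn (fun x => a x * ‖gradient u x‖ ^ 2) Ω)
    (hint2 : IntegrableOn (fun x => atil x * ‖gradient util x‖ ^ 2) Ω)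
    (hint3 : IntegrableOn (fun x => atil x * ⟪gradient util x, gradient u x⟫) Ω)
    (hint4 : IntegrableOn (fun x => a x * ⟪gradient u x, gradient util x⟫) Ω)
    (hint5 : IntegrableOn (fun x => atil x * ‖gradient u x - gradient util x‖ ^ 2) Ω)
    (hint6 : IntegrableOn (fun x => ‖gradient u x‖ ^ 2) ω)
    (hB1 : (∫ x in Ω, a x * ‖gradient u x‖ ^ 2)
        = ∫ x in Ω, atil x * ⟪gradient util x, gradient u x⟫)
    (hB2 : (∫ x in Ω, a x * ⟪gradient u x, gradient util x⟫)
        = ∫ x in Ω, atil x * ‖gradient util x‖ ^ 2) :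
    (∫ x in Ω, atil x * ‖gradient u x - gradient util x‖ ^ 2)
      ≤ |a₀ - a₁| * (∫ x in ω, ‖gradient u x‖ ^ 2)
        + |(∫ x in Ω, a x * ‖gradient u x‖ ^ 2) - ∫ x in Ω, atil x * ‖gradient util x‖ ^ 2| := by

  set f := gradient u with hfdef
  set g := gradient util with hgdef
  set c := a₀ - a₁ with hcdef
  have hindint : Integrable (ω.indicator (fun y => ‖f y‖ ^ 2)) :=
    (integrable_indicator_iff hωmeas).2 hint6
  have hind : IntegrableOn (fun x => c * ω.indicator (fun y => ‖f y‖ ^ 2) x) Ω :=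
    ((hindint.const_mul c)).integrableOn
  have heqΩ : ∀ x ∈ Ω, atil x * ‖f x‖ ^ 2
      = a x * ‖f x‖ ^ 2 + c * ω.indicator (fun y => ‖f y‖ ^ 2) x := by
    intro x hx
    by_cases hxω : x ∈ ω
    · have h := ha_diff x hxω
      rw [Set.indicator_of_mem hxω]
      nlinarith [h]
    · rw [Set.indicator_of_notMem hxω, ha_eq x ⟨hx, hxω⟩]; ring
  have hK1int : IntegrableOn (fun x => atil x * ‖f x‖ ^ 2) Ω := by
    refine (hint1.add hind).congr ?_
    exact (ae_restrict_iff' hΩmeas).2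
      (Filter.Eventually.of_forall fun x hx => (heqΩ x hx).symm)
  have hK1 : (∫ x in Ω, atil x * ‖f x‖ ^ 2)
      = (∫ x in Ω, a x * ‖f x‖ ^ 2) + c * ∫ x in ω, ‖f x‖ ^ 2 := by
    rw [setIntegral_congr_fun hΩmeas heqΩ, integral_add hint1 hind, integral_const_mul,
      setIntegral_indicator hωmeas, Set.inter_eq_self_of_subset_right hωsub]
  have hKint : IntegrableOn (fun x => atil x * ⟪f x, g x⟫) Ω := by
    refine hint3.congr (Filter.Eventually.of_forall fun x => ?_)
    show atil x * ⟪g x, f x⟫ = atil x * ⟪f x, g x⟫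
    rw [real_inner_comm]
  have hKval : (∫ x in Ω, atil x * ⟪f x, g x⟫) = ∫ x in Ω, a x * ‖f x‖ ^ 2 := by
    rw [hB1]
    exact integral_congr_ae (Filter.Eventually.of_forall fun x => by
      show atil x * ⟪f x, g x⟫ = atil x * ⟪g x, f x⟫
      rw [real_inner_comm])
  have hexp : ∀ x, atil x * ‖f x - g x‖ ^ 2
      = atil x * ‖f x‖ ^ 2 - 2 * (atil x * ⟪f x, g x⟫) + atil x * ‖g x‖ ^ 2 := by
    intro x
    have h : ‖f x - g x‖ ^ 2 = ‖f x‖ ^ 2 - 2 * ⟪f x, g x⟫ + ‖g x‖ ^ 2 :=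
      norm_sub_sq_real (f x) (g x)
    rw [h]; ring
  have hE : (∫ x in Ω, atil x * ‖f x - g x‖ ^ 2)
      = (∫ x in Ω, atil x * ‖f x‖ ^ 2) - 2 * (∫ x in Ω, atil x * ⟪f x, g x⟫)
        + ∫ x in Ω, atil x * ‖g x‖ ^ 2 := by
    have h2int : IntegrableOn (fun x => 2 * (atil x * ⟪f x, g x⟫)) Ω :=
      hKint.const_mul 2
    have hsubint : IntegrableOn
        (fun x => atil x * ‖f x‖ ^ 2 - 2 * (atil x * ⟪f x, g x⟫)) Ω :=
      hK1int.sub h2int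
    rw [integral_congr_ae (Filter.Eventually.of_forall hexp),
      integral_add hsubint hint2, integral_sub hK1int h2int, integral_const_mul]
  have hJ : 0 ≤ ∫ x in ω, ‖f x‖ ^ 2 :=
    setIntegral_nonneg hωmeas fun x _ => by positivity
  rw [hE, hKval, hK1]
  have h1 : c * ∫ x in ω, ‖f x‖ ^ 2 ≤ |c| * ∫ x in ω, ‖f x‖ ^ 2 :=
    mul_le_mul_of_nonneg_right (le_abs_self c) hJ
  have h2 : (∫ x in Ω, atil x * ‖g x‖ ^ 2) - (∫ x in Ω, a x * ‖f x‖ ^ 2)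
      ≤ |(∫ x in Ω, a x * ‖f x‖ ^ 2) - ∫ x in Ω, atil x * ‖g x‖ ^ 2| := by
    rw [abs_sub_comm]; exact le_abs_self _
  linarith
end

section
/- Let u, ũ : ℝ² → ℝ be differentiable functions such that B(u,u) = B̃(ũ,u) and B(u,ũ) = B̃(ũ,ũ), and assume a ≥ 0 on Ω. Then |a₀ − a₁| · ∫_ω ‖∇ũ‖² dx ≤ |∫_Ω a ‖∇u‖² dx − ∫_Ω ã ‖∇ũ‖² dx| + ∫_Ω a ‖∇u − ∇ũ‖² dx. -/
open MeasureTheory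
open scoped RealInnerProductSpace

theorem aux_stmt_4 {α F : Type*} [MeasurableSpace α] {μ : MeasureTheory.Measure α}
    [NormedAddCommGroup F] [InnerProductSpace ℝ F]
    (Ω ω : Set α)
    (hΩmeas : MeasurableSet Ω) (hωmeas : MeasurableSet ω) (hωsub : ω ⊆ Ω)
    (a₀ a₁ : ℝ) (a atil : α → ℝ)
    (ha_eq : ∀ x ∈ Ω \ ω, a x = atil x)
    (ha_diff : ∀ x ∈ ω, atil x - a x = a₀ - a₁)
    (ha_nonneg : ∀ x ∈ Ω, 0 ≤ a x)
    (v w : α → F)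
    (hint1 : IntegrableOn (fun x => a x * ‖v x‖ ^ 2) Ω μ)
    (hint2 : IntegrableOn (fun x => atil x * ‖w x‖ ^ 2) Ω μ)
    (hint4 : IntegrableOn (fun x => a x * ⟪v x, w x⟫) Ω μ)
    (hint5 : IntegrableOn (fun x => a x * ‖v x - w x‖ ^ 2) Ω μ)
    (hB2 : (∫ x in Ω, a x * ⟪v x, w x⟫ ∂μ) = ∫ x in Ω, atil x * ‖w x‖ ^ 2 ∂μ) :
    |a₀ - a₁| * (∫ x in ω, ‖w x‖ ^ 2 ∂μ)
      ≤ |(∫ x in Ω, a x * ‖v x‖ ^ 2 ∂μ) - ∫ x in Ω, atil x * ‖w x‖ ^ 2 ∂μ|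
        + ∫ x in Ω, a x * ‖v x - w x‖ ^ 2 ∂μ := by
  set A := ∫ x in Ω, a x * ‖v x‖ ^ 2 ∂μ with hA
  set At := ∫ x in Ω, atil x * ‖w x‖ ^ 2 ∂μ with hAt
  set D := ∫ x in Ω, a x * ‖v x - w x‖ ^ 2 ∂μ with hD
  set I := ∫ x in ω, ‖w x‖ ^ 2 ∂μ with hIdef
  have hpt : (fun x => a x * ‖v x - w x‖ ^ 2)
      = fun x => a x * ‖v x‖ ^ 2 - 2 * (a x * ⟪v x, w x⟫) + a x * ‖w x‖ ^ 2 := by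
    funext x
    rw [norm_sub_sq_real]; ring
  have hg : IntegrableOn (fun x => a x * ‖w x‖ ^ 2) Ω μ := by
    have heq : (fun x => a x * ‖w x‖ ^ 2)
        = fun x => a x * ‖v x - w x‖ ^ 2
          - (a x * ‖v x‖ ^ 2 - 2 * (a x * ⟪v x, w x⟫)) := by
      funext x; rw [norm_sub_sq_real]; ring
    rw [heq]
    exact hint5.sub (hint1.sub (hint4.const_mul 2))
  have hi12 : IntegrableOn (fun x => a x * ‖v x‖ ^ 2 - 2 * (a x * ⟪v x, w x⟫)) Ω μ := by
    have h := hint1.sub (hint4.const_mul 2)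
    simpa [Pi.sub_def] using h
  have hGeq : (∫ x in Ω, a x * ‖w x‖ ^ 2 ∂μ) = D - A + 2 * At := by
    have h1 : D = (A - ∫ x in Ω, 2 * (a x * ⟪v x, w x⟫) ∂μ)
        + ∫ x in Ω, a x * ‖w x‖ ^ 2 ∂μ := by
      calc D = ∫ x in Ω, (a x * ‖v x‖ ^ 2 - 2 * (a x * ⟪v x, w x⟫)
            + a x * ‖w x‖ ^ 2) ∂μ := by rw [hD, hpt]
        _ = (∫ x in Ω, (a x * ‖v x‖ ^ 2 - 2 * (a x * ⟪v x, w x⟫)) ∂μ)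
            + ∫ x in Ω, a x * ‖w x‖ ^ 2 ∂μ :=
          integral_add hi12 hg
        _ = ((∫ x in Ω, a x * ‖v x‖ ^ 2 ∂μ)
              - ∫ x in Ω, 2 * (a x * ⟪v x, w x⟫) ∂μ)
            + ∫ x in Ω, a x * ‖w x‖ ^ 2 ∂μ := by
          rw [integral_sub hint1 (hint4.const_mul 2)]
    have h2 : (∫ x in Ω, 2 * (a x * ⟪v x, w x⟫) ∂μ) = 2 * At := by
      rw [integral_const_mul, hB2]
    rw [h2] at h1
    linarith
  have hf : IntegrableOn (fun x => (a x - atil x) * ‖w x‖ ^ 2) Ω μ := by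
    have heq : (fun x => (a x - atil x) * ‖w x‖ ^ 2)
        = fun x => a x * ‖w x‖ ^ 2 - atil x * ‖w x‖ ^ 2 := by
      funext x; ring
    rw [heq]; exact hg.sub hint2
  have hΩu : Ω = ω ∪ (Ω \ ω) := (Set.union_diff_cancel hωsub).symm
  have h0 : (∫ x in Ω \ ω, (a x - atil x) * ‖w x‖ ^ 2 ∂μ) = 0 := by
    have hz : ∀ x ∈ Ω \ ω, (a x - atil x) * ‖w x‖ ^ 2 = 0 := by
      intro x hx; rw [ha_eq x hx]; ring
    rw [setIntegral_congr_fun (hΩmeas.diff hωmeas) hz]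
    simp
  have hωint : (∫ x in ω, (a x - atil x) * ‖w x‖ ^ 2 ∂μ) = (a₁ - a₀) * I := by
    have hz : ∀ x ∈ ω, (a x - atil x) * ‖w x‖ ^ 2 = (a₁ - a₀) * ‖w x‖ ^ 2 := by
      intro x hx
      have h := ha_diff x hx
      have h' : a x - atil x = a₁ - a₀ := by linarith
      rw [h']
    rw [setIntegral_congr_fun hωmeas hz, integral_const_mul, hIdef]
  have hsplit : (a₁ - a₀) * I = D - A + At := by
    have hunion := setIntegral_union
      (f := fun x => (a x - atil x) * ‖w x‖ ^ 2) (μ := μ)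
      Set.disjoint_sdiff_right (hΩmeas.diff hωmeas)
      (hf.mono_set hωsub) (hf.mono_set Set.diff_subset)
    rw [← hΩu] at hunion
    have hsubint : (∫ x in Ω, (a x - atil x) * ‖w x‖ ^ 2 ∂μ)
        = (∫ x in Ω, a x * ‖w x‖ ^ 2 ∂μ) - At := by
      have heq : (fun x => (a x - atil x) * ‖w x‖ ^ 2)
          = fun x => a x * ‖w x‖ ^ 2 - atil x * ‖w x‖ ^ 2 := by
        funext x; ring
      rw [heq, integral_sub hg hint2, hAt]
    rw [hunion, h0, hωint, add_zero] at hsubint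
    rw [hsubint, hGeq]; ring
  have hInn : 0 ≤ I := setIntegral_nonneg hωmeas (fun x _ => by positivity)
  have hDnn : 0 ≤ D :=
    setIntegral_nonneg hΩmeas (fun x hx => mul_nonneg (ha_nonneg x hx) (by positivity))
  have hkey : |a₀ - a₁| * I = |D - A + At| := by
    rw [← hsplit, abs_mul, abs_of_nonneg hInn, abs_sub_comm]
  rw [hkey]
  have h1 : |D - A + At| ≤ |D| + |A - At| := by
    have habs := abs_sub D (A - At)
    have heq : D - (A - At) = D - A + At := by ring
    rwa [heq] at habs
  rw [abs_of_nonneg hDnn] at h1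
  linarith

theorem stmt_4
    (Ω ω : Set (EuclideanSpace ℝ (Fin 2)))
    (hΩmeas : MeasurableSet Ω) (hΩfin : volume Ω < ⊤)
    (hωmeas : MeasurableSet ω) (hωsub : ω ⊆ Ω)
    (a₀ a₁ : ℝ) (a atil : EuclideanSpace ℝ (Fin 2) → ℝ)
    (hameas : Measurable a) (hatilmeas : Measurable atil)
    (ha_eq : ∀ x ∈ Ω \ ω, a x = atil x)
    (ha_diff : ∀ x ∈ ω, atil x - a x = a₀ - a₁)
    (ha_nonneg : ∀ x ∈ Ω, 0 ≤ a x)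
    (u util : EuclideanSpace ℝ (Fin 2) → ℝ)
    (hu : Differentiable ℝ u) (hutil : Differentiable ℝ util)
    (hint1 : IntegrableOn (fun x => a x * ‖gradient u x‖ ^ 2) Ω)
    (hint2 : IntegrableOn (fun x => atil x * ‖gradient util x‖ ^ 2) Ω)
    (hint3 : IntegrableOn (fun x => atil x * ⟪gradient util x, gradient u x⟫) Ω)
    (hint4 : IntegrableOn (fun x => a x * ⟪gradient u x, gradient util x⟫) Ω)
    (hint5 : IntegrableOn (fun x => a x * ‖gradient u x - gradient util x‖ ^ 2) Ω)
    (hint6 : IntegrableOn (fun x => ‖gradient util x‖ ^ 2) ω)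
    (hB1 : (∫ x in Ω, a x * ‖gradient u x‖ ^ 2)
        = ∫ x in Ω, atil x * ⟪gradient util x, gradient u x⟫)
    (hB2 : (∫ x in Ω, a x * ⟪gradient u x, gradient util x⟫)
        = ∫ x in Ω, atil x * ‖gradient util x‖ ^ 2) :
    |a₀ - a₁| * (∫ x in ω, ‖gradient util x‖ ^ 2)
      ≤ |(∫ x in Ω, a x * ‖gradient u x‖ ^ 2) - ∫ x in Ω, atil x * ‖gradient util x‖ ^ 2|
        + ∫ x in Ω, a x * ‖gradient u x - gradient util x‖ ^ 2 := by
  exact aux_stmt_4 Ω ω hΩmeas hωmeas hωsub a₀ a₁ a atil ha_eq ha_diff ha_nonneg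
    (fun x => gradient u x) (fun x => gradient util x) hint1 hint2 hint4 hint5 hB2
end

section
/- Let 0 < β₀ ≤ β₁, c₀ > 0, M ≥ 0, a₀, a₁ ∈ ℝ, and let u : ℝ² → ℝ be differentiable with ‖∇u(x)‖ ≤ M for almost every x ∈ Ω and ∫_Ω ‖∇u‖² dx < ∞. Suppose that for every h ∈ (0,1] we are given: a measurable set ω_h ⊆ Ω with μ(ω_h) ≤ c₀ h²; a measurable function ã_h : ℝ² → ℝ with ã_h = a on Ω \ ω_h, ã_h − a = a₀ − a₁ on ω_h, and β₀ ≤ a(x) ≤ β₁, β₀ ≤ ã_h(x) ≤ β₁ on Ω; and a differentiable ũ_h : ℝ² → ℝ with B(u,u) = B̃_h(ũ_h,u) and B(u,ũ_h) = B̃_h(ũ_h,ũ_h), where B̃_h(v,w) := ∫_Ω ã_h ⟨∇v,∇w⟩ dx. Then there exists a constant C ≥ 0 such that for all h ∈ (0,1]: |∫_Ω a ‖∇u‖² dx − ∫_Ω ã_h ‖∇ũ_h‖² dx| ≤ C h². -/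
/-!
Off `ω` the two coefficients agree, and on `ω` they differ by the constant `a₀ - a₁`. Subtracting
the two defining identities shows that the error `e = ∇u - ∇ũ` has `ã`-energy
`∫ ã ‖e‖² = ∫ (ã - a) ⟪∇u, e⟫`, an integral over `ω` only; Young's inequality and `‖∇u‖ ≤ M`
bound it by `|a₀ - a₁|² M² |ω| / β₀`. The energy difference itself is `∫_ω (ã - a) ‖∇u‖²` minus
this error energy, hence `O(|ω|) = O(h²)`.
-/

open MeasureTheory
open scoped RealInnerProductSpace

lemma mul_le_sq_div_add_mul_sq {ε : ℝ} (hε : 0 < ε) (s t : ℝ) :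
    s * t ≤ s ^ 2 / ε / 2 + ε * t ^ 2 / 2 := by
  have key : 2 * ε * (s * t) ≤ s ^ 2 + ε ^ 2 * t ^ 2 := by nlinarith [sq_nonneg (s - ε * t)]
  have hs : s ^ 2 / ε * ε = s ^ 2 := div_mul_cancel₀ _ hε.ne'
  nlinarith

section EnergyIdentities

variable {X E : Type*} [MeasurableSpace X] {μ : Measure X}
  [NormedAddCommGroup E] [InnerProductSpace ℝ E] {a b : X → ℝ} {v w : X → E}

lemma mul_norm_sub_sq_real (c : ℝ) (p q : E) :
    c * ‖p - q‖ ^ 2 = c * ‖p‖ ^ 2 - 2 * (c * ⟪q, p⟫) + c * ‖q‖ ^ 2 := by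
  rw [norm_sub_sq_real, real_inner_comm]; ring

lemma sub_mul_inner_sub_right (c d : ℝ) (p q : E) :
    (c - d) * ⟪p, p - q⟫ = c * ‖p‖ ^ 2 - c * ⟪q, p⟫ - (d * ‖p‖ ^ 2 - d * ⟪p, q⟫) := by
  rw [inner_sub_right, real_inner_self_eq_norm_sq, real_inner_comm q]; ring

lemma integrable_mul_norm_sub_sq (hbv : Integrable (fun x => b x * ‖v x‖ ^ 2) μ)
    (hbwv : Integrable (fun x => b x * ⟪w x, v x⟫) μ)
    (hbw : Integrable (fun x => b x * ‖w x‖ ^ 2) μ) :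
    Integrable (fun x => b x * ‖v x - w x‖ ^ 2) μ := by
  simp_rw [mul_norm_sub_sq_real]
  exact (hbv.sub (hbwv.const_mul 2)).add hbw

lemma integral_mul_norm_sub_sq (hbv : Integrable (fun x => b x * ‖v x‖ ^ 2) μ)
    (hbwv : Integrable (fun x => b x * ⟪w x, v x⟫) μ)
    (hbw : Integrable (fun x => b x * ‖w x‖ ^ 2) μ) :
    ∫ x, b x * ‖v x - w x‖ ^ 2 ∂μ
      = ∫ x, b x * ‖v x‖ ^ 2 ∂μ - 2 * ∫ x, b x * ⟪w x, v x⟫ ∂μ + ∫ x, b x * ‖w x‖ ^ 2 ∂μ := by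
  simp_rw [mul_norm_sub_sq_real]
  rw [integral_add ?_ hbw, integral_sub hbv (hbwv.const_mul 2), integral_const_mul]
  exact hbv.sub (hbwv.const_mul 2)

lemma integrable_sub_mul_inner_sub_right (hbv : Integrable (fun x => b x * ‖v x‖ ^ 2) μ)
    (hbwv : Integrable (fun x => b x * ⟪w x, v x⟫) μ)
    (hav : Integrable (fun x => a x * ‖v x‖ ^ 2) μ)
    (havw : Integrable (fun x => a x * ⟪v x, w x⟫) μ) :
    Integrable (fun x => (b x - a x) * ⟪v x, v x - w x⟫) μ := by
  simp_rw [sub_mul_inner_sub_right]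
  exact (hbv.sub hbwv).sub (hav.sub havw)

lemma integral_sub_mul_inner_sub_right (hbv : Integrable (fun x => b x * ‖v x‖ ^ 2) μ)
    (hbwv : Integrable (fun x => b x * ⟪w x, v x⟫) μ)
    (hav : Integrable (fun x => a x * ‖v x‖ ^ 2) μ)
    (havw : Integrable (fun x => a x * ⟪v x, w x⟫) μ) :
    ∫ x, (b x - a x) * ⟪v x, v x - w x⟫ ∂μ
      = ∫ x, b x * ‖v x‖ ^ 2 ∂μ - ∫ x, b x * ⟪w x, v x⟫ ∂μ
        - (∫ x, a x * ‖v x‖ ^ 2 ∂μ - ∫ x, a x * ⟪v x, w x⟫ ∂μ) := by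
  simp_rw [sub_mul_inner_sub_right]
  rw [integral_sub ?_ ?_, integral_sub hbv hbwv, integral_sub hav havw]
  exacts [hbv.sub hbwv, hav.sub havw]

theorem integral_mul_norm_sub_sq_eq_integral_sub_mul_inner
    (hbv : Integrable (fun x => b x * ‖v x‖ ^ 2) μ)
    (hbwv : Integrable (fun x => b x * ⟪w x, v x⟫) μ)
    (hbw : Integrable (fun x => b x * ‖w x‖ ^ 2) μ)
    (hav : Integrable (fun x => a x * ‖v x‖ ^ 2) μ)
    (havw : Integrable (fun x => a x * ⟪v x, w x⟫) μ)
    (hv : ∫ x, a x * ‖v x‖ ^ 2 ∂μ = ∫ x, b x * ⟪w x, v x⟫ ∂μ)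
    (hw : ∫ x, a x * ⟪v x, w x⟫ ∂μ = ∫ x, b x * ‖w x‖ ^ 2 ∂μ) :
    ∫ x, b x * ‖v x - w x‖ ^ 2 ∂μ = ∫ x, (b x - a x) * ⟪v x, v x - w x⟫ ∂μ := by
  rw [integral_mul_norm_sub_sq hbv hbwv hbw, integral_sub_mul_inner_sub_right hbv hbwv hav havw]
  linarith

theorem integral_mul_norm_sq_sub_integral_mul_norm_sq
    (hbv : Integrable (fun x => b x * ‖v x‖ ^ 2) μ)
    (hbwv : Integrable (fun x => b x * ⟪w x, v x⟫) μ)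
    (hbw : Integrable (fun x => b x * ‖w x‖ ^ 2) μ)
    (hav : Integrable (fun x => a x * ‖v x‖ ^ 2) μ)
    (hv : ∫ x, a x * ‖v x‖ ^ 2 ∂μ = ∫ x, b x * ⟪w x, v x⟫ ∂μ) :
    ∫ x, a x * ‖v x‖ ^ 2 ∂μ - ∫ x, b x * ‖w x‖ ^ 2 ∂μ
      = ∫ x, (b x - a x) * ‖v x‖ ^ 2 ∂μ - ∫ x, b x * ‖v x - w x‖ ^ 2 ∂μ := by
  simp_rw [sub_mul]
  rw [integral_sub hbv hav, integral_mul_norm_sub_sq hbv hbwv hbw]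
  linarith

end EnergyIdentities

section LocalizedPerturbation

variable {X E : Type*} [MeasurableSpace X] {μ : Measure X} [NormedAddCommGroup E]
  {Ω ω : Set X} {κ M : ℝ}

lemma abs_setIntegral_mul_norm_sq_le {δ : X → ℝ} {v : X → E}
    (hΩ : MeasurableSet Ω) (hω : MeasurableSet ω) (hωΩ : ω ⊆ Ω) (hωfin : μ ω < ⊤)
    (hδ₀ : ∀ x ∈ Ω \ ω, δ x = 0) (hδ : ∀ x ∈ ω, |δ x| ≤ κ)
    (hv : ∀ᵐ x ∂μ.restrict ω, ‖v x‖ ≤ M) :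
    |∫ x in Ω, δ x * ‖v x‖ ^ 2 ∂μ| ≤ κ * M ^ 2 * μ.real ω := by
  rw [setIntegral_eq_of_subset_of_forall_sdiff_eq_zero hΩ hωΩ fun x hx => by simp [hδ₀ x hx],
    ← Real.norm_eq_abs]
  refine norm_setIntegral_le_of_norm_le_const_ae hωfin ?_
  filter_upwards [hv, ae_restrict_mem hω] with x hvx hx
  rw [Real.norm_eq_abs, abs_mul, abs_of_nonneg (sq_nonneg ‖v x‖)]
  have hM : ‖v x‖ ^ 2 ≤ M ^ 2 := pow_le_pow_left₀ (norm_nonneg _) hvx 2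
  exact mul_le_mul (hδ x hx) hM (sq_nonneg _) ((abs_nonneg _).trans (hδ x hx))

/-- The `b`-energy of `e` is absorbed: Young's inequality moves half of it to the left. -/
lemma setIntegral_mul_norm_sq_le_of_eq [InnerProductSpace ℝ E] {β₀ : ℝ} {b δ : X → ℝ}
    {v e : X → E}
    (hΩ : MeasurableSet Ω) (hω : MeasurableSet ω) (hωΩ : ω ⊆ Ω) (hωfin : μ ω < ⊤)
    (hβ₀ : 0 < β₀) (hb : ∀ x ∈ Ω, β₀ ≤ b x)
    (hδ₀ : ∀ x ∈ Ω \ ω, δ x = 0) (hδ : ∀ x ∈ ω, |δ x| ≤ κ)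
    (hv : ∀ᵐ x ∂μ.restrict ω, ‖v x‖ ≤ M)
    (hbe : IntegrableOn (fun x => b x * ‖e x‖ ^ 2) Ω μ)
    (hδe : IntegrableOn (fun x => δ x * ⟪v x, e x⟫) Ω μ)
    (heq : ∫ x in Ω, b x * ‖e x‖ ^ 2 ∂μ = ∫ x in Ω, δ x * ⟪v x, e x⟫ ∂μ) :
    ∫ x in Ω, b x * ‖e x‖ ^ 2 ∂μ ≤ κ ^ 2 * M ^ 2 / β₀ * μ.real ω := by
  set c := κ ^ 2 * M ^ 2 / β₀
  have hpointwise : ∀ᵐ x ∂μ.restrict ω, δ x * ⟪v x, e x⟫ ≤ c / 2 + b x * ‖e x‖ ^ 2 / 2 := by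
    filter_upwards [hv, ae_restrict_mem hω] with x hvx hx
    have hκ : 0 ≤ κ := (abs_nonneg _).trans (hδ x hx)
    calc δ x * ⟪v x, e x⟫ ≤ |δ x| * |⟪v x, e x⟫| := by rw [← abs_mul]; exact le_abs_self _
      _ ≤ κ * (M * ‖e x‖) := by
          refine mul_le_mul (hδ x hx) ?_ (abs_nonneg _) hκ
          exact (abs_real_inner_le_norm _ _).trans (by gcongr)
      _ = (κ * M) * ‖e x‖ := by ring
      _ ≤ (κ * M) ^ 2 / β₀ / 2 + β₀ * ‖e x‖ ^ 2 / 2 := mul_le_sq_div_add_mul_sq hβ₀ _ _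
      _ = c / 2 + β₀ * ‖e x‖ ^ 2 / 2 := by simp only [c]; ring
      _ ≤ c / 2 + b x * ‖e x‖ ^ 2 / 2 := by gcongr; exact hb x (hωΩ hx)
  have hbeω : IntegrableOn (fun x => b x * ‖e x‖ ^ 2) ω μ := hbe.mono_set hωΩ
  have hc : IntegrableOn (fun _ => c / 2) ω μ := integrableOn_const hωfin.ne
  have hupper : ∫ x in Ω, b x * ‖e x‖ ^ 2 ∂μ ≤ c / 2 * μ.real ω
      + (∫ x in ω, b x * ‖e x‖ ^ 2 ∂μ) / 2 := by
    rw [heq, setIntegral_eq_of_subset_of_forall_sdiff_eq_zero hΩ hωΩ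
      fun x hx => by simp [hδ₀ x hx]]
    refine (integral_mono_ae (hδe.mono_set hωΩ) (hc.add (hbeω.div_const 2))
      hpointwise).trans_eq ?_
    rw [integral_add' hc (hbeω.div_const 2), setIntegral_const,
      integral_div, smul_eq_mul, mul_comm]
  have hmono : ∫ x in ω, b x * ‖e x‖ ^ 2 ∂μ ≤ ∫ x in Ω, b x * ‖e x‖ ^ 2 ∂μ :=
    setIntegral_mono_set hbe ((ae_restrict_iff' hΩ).2 (ae_of_all _ fun x hx =>
      mul_nonneg (hβ₀.le.trans (hb x hx)) (sq_nonneg _))) hωΩ.eventuallyLE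
  linarith

theorem abs_setIntegral_mul_norm_sq_sub_le [InnerProductSpace ℝ E] {β₀ β₁ : ℝ} {a b : X → ℝ}
    {v w : X → E} (hΩ : MeasurableSet Ω) (hω : MeasurableSet ω) (hωΩ : ω ⊆ Ω)
    (hωfin : μ ω < ⊤) (hβ₀ : 0 < β₀) (hb : ∀ x ∈ Ω, β₀ ≤ b x ∧ b x ≤ β₁)
    (hbm : AEStronglyMeasurable b (μ.restrict Ω))
    (hba : ∀ x ∈ Ω \ ω, b x = a x) (hδ : ∀ x ∈ ω, |b x - a x| ≤ κ)
    (hv : ∀ᵐ x ∂μ.restrict ω, ‖v x‖ ≤ M)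
    (hvv : IntegrableOn (fun x => ‖v x‖ ^ 2) Ω μ)
    (hav : IntegrableOn (fun x => a x * ‖v x‖ ^ 2) Ω μ)
    (hbwv : IntegrableOn (fun x => b x * ⟪w x, v x⟫) Ω μ)
    (havw : IntegrableOn (fun x => a x * ⟪v x, w x⟫) Ω μ)
    (hbw : IntegrableOn (fun x => b x * ‖w x‖ ^ 2) Ω μ)
    (hvt : ∫ x in Ω, a x * ‖v x‖ ^ 2 ∂μ = ∫ x in Ω, b x * ⟪w x, v x⟫ ∂μ)
    (hwt : ∫ x in Ω, a x * ⟪v x, w x⟫ ∂μ = ∫ x in Ω, b x * ‖w x‖ ^ 2 ∂μ) :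
    |∫ x in Ω, a x * ‖v x‖ ^ 2 ∂μ - ∫ x in Ω, b x * ‖w x‖ ^ 2 ∂μ|
      ≤ (κ * M ^ 2 + κ ^ 2 * M ^ 2 / β₀) * μ.real ω := by
  have hbv : IntegrableOn (fun x => b x * ‖v x‖ ^ 2) Ω μ := by
    refine hvv.bdd_mul (c := β₁) hbm ?_
    filter_upwards [ae_restrict_mem hΩ] with x hx
    rw [Real.norm_eq_abs, abs_le]
    constructor <;> linarith [hb x hx]
  have hδ₀ : ∀ x ∈ Ω \ ω, b x - a x = 0 := fun x hx => sub_eq_zero.2 (hba x hx)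
  have herr := setIntegral_mul_norm_sq_le_of_eq hΩ hω hωΩ hωfin hβ₀ (fun x hx => (hb x hx).1)
    hδ₀ hδ hv (integrable_mul_norm_sub_sq hbv hbwv hbw)
    (integrable_sub_mul_inner_sub_right hbv hbwv hav havw)
    (integral_mul_norm_sub_sq_eq_integral_sub_mul_inner hbv hbwv hbw hav havw hvt hwt)
  have herr₀ : 0 ≤ ∫ x in Ω, b x * ‖v x - w x‖ ^ 2 ∂μ := setIntegral_nonneg hΩ fun x hx =>
    mul_nonneg (hβ₀.le.trans (hb x hx).1) (sq_nonneg _)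
  rw [integral_mul_norm_sq_sub_integral_mul_norm_sq hbv hbwv hbw hav hvt, add_mul]
  refine (abs_sub _ _).trans (add_le_add ?_ ?_)
  · exact abs_setIntegral_mul_norm_sq_le hΩ hω hωΩ hωfin hδ₀ hδ hv
  · rwa [abs_of_nonneg herr₀]

end LocalizedPerturbation

theorem stmt_8_general
    (Ω : Set (EuclideanSpace ℝ (Fin 2)))
    (hΩmeas : MeasurableSet Ω) (hΩfin : volume Ω < ⊤)
    (a : EuclideanSpace ℝ (Fin 2) → ℝ)
    (β₀ β₁ : ℝ) (hβ₀ : 0 < β₀)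
    (c₀ M a₀ a₁ : ℝ) (hc₀ : 0 < c₀)
    (u : EuclideanSpace ℝ (Fin 2) → ℝ)
    (hM : ∀ᵐ x ∂volume.restrict Ω, ‖gradient u x‖ ≤ M)
    (huint : IntegrableOn (fun x => ‖gradient u x‖ ^ 2) Ω)
    (hauint : IntegrableOn (fun x => a x * ‖gradient u x‖ ^ 2) Ω)
    (ω : ℝ → Set (EuclideanSpace ℝ (Fin 2)))
    (atil : ℝ → EuclideanSpace ℝ (Fin 2) → ℝ)
    (util : ℝ → EuclideanSpace ℝ (Fin 2) → ℝ)
    (hωmeas : ∀ h ∈ Set.Ioc (0:ℝ) 1, MeasurableSet (ω h))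
    (hωsub : ∀ h ∈ Set.Ioc (0:ℝ) 1, ω h ⊆ Ω)
    (hωvol : ∀ h ∈ Set.Ioc (0:ℝ) 1, (volume (ω h)).toReal ≤ c₀ * h ^ 2)
    (hatilmeas : ∀ h ∈ Set.Ioc (0:ℝ) 1, Measurable (atil h))
    (hatil_eq : ∀ h ∈ Set.Ioc (0:ℝ) 1, ∀ x ∈ Ω \ ω h, atil h x = a x)
    (hatil_diff : ∀ h ∈ Set.Ioc (0:ℝ) 1, ∀ x ∈ ω h, atil h x - a x = a₀ - a₁)
    (hatil_bdd : ∀ h ∈ Set.Ioc (0:ℝ) 1, ∀ x ∈ Ω, β₀ ≤ atil h x ∧ atil h x ≤ β₁)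
    (hint : ∀ h ∈ Set.Ioc (0:ℝ) 1,
        IntegrableOn (fun x => atil h x * ‖gradient (util h) x‖ ^ 2) Ω ∧
        IntegrableOn (fun x => atil h x * ⟪gradient (util h) x, gradient u x⟫) Ω ∧
        IntegrableOn (fun x => a x * ⟪gradient u x, gradient (util h) x⟫) Ω ∧
        IntegrableOn (fun x => ‖gradient (util h) x‖ ^ 2) Ω)
    (hB1 : ∀ h ∈ Set.Ioc (0:ℝ) 1,
        (∫ x in Ω, a x * ‖gradient u x‖ ^ 2)
          = ∫ x in Ω, atil h x * ⟪gradient (util h) x, gradient u x⟫)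
    (hB2 : ∀ h ∈ Set.Ioc (0:ℝ) 1,
        (∫ x in Ω, a x * ⟪gradient u x, gradient (util h) x⟫)
          = ∫ x in Ω, atil h x * ‖gradient (util h) x‖ ^ 2) :
    ∃ C : ℝ, 0 ≤ C ∧ ∀ h ∈ Set.Ioc (0:ℝ) 1,
      |(∫ x in Ω, a x * ‖gradient u x‖ ^ 2)
          - ∫ x in Ω, atil h x * ‖gradient (util h) x‖ ^ 2| ≤ C * h ^ 2 := by
  set κ := |a₀ - a₁|
  refine ⟨(κ * M ^ 2 + κ ^ 2 * M ^ 2 / β₀) * c₀, mul_nonneg (by positivity) hc₀.le,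
    fun h hh => ?_⟩
  obtain ⟨hbw, hbwv, havw, -⟩ := hint h hh
  have hωfin : volume (ω h) < ⊤ := (measure_mono (hωsub h hh)).trans_lt hΩfin
  calc _ ≤ (κ * M ^ 2 + κ ^ 2 * M ^ 2 / β₀) * volume.real (ω h) :=
        abs_setIntegral_mul_norm_sq_sub_le hΩmeas (hωmeas h hh) (hωsub h hh) hωfin hβ₀
          (hatil_bdd h hh) (hatilmeas h hh).aestronglyMeasurable (hatil_eq h hh)
          (fun x hx => (congrArg abs (hatil_diff h hh x hx)).le)
          (ae_restrict_of_ae_restrict_of_subset (hωsub h hh) hM)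
          huint hauint hbwv havw hbw (hB1 h hh) (hB2 h hh)
    _ ≤ (κ * M ^ 2 + κ ^ 2 * M ^ 2 / β₀) * (c₀ * h ^ 2) := by
        gcongr
        exact hωvol h hh
    _ = _ := by ring

theorem stmt_8
    (Ω : Set (EuclideanSpace ℝ (Fin 2)))
    (hΩmeas : MeasurableSet Ω) (hΩfin : volume Ω < ⊤)
    (a : EuclideanSpace ℝ (Fin 2) → ℝ) (hameas : Measurable a)
    (β₀ β₁ : ℝ) (hβ₀ : 0 < β₀) (hβ : β₀ ≤ β₁)
    (c₀ M a₀ a₁ : ℝ) (hc₀ : 0 < c₀) (hM0 : 0 ≤ M)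
    (u : EuclideanSpace ℝ (Fin 2) → ℝ) (hu : Differentiable ℝ u)
    (hM : ∀ᵐ x ∂volume.restrict Ω, ‖gradient u x‖ ≤ M)
    (huint : IntegrableOn (fun x => ‖gradient u x‖ ^ 2) Ω)
    (ha_bdd : ∀ x ∈ Ω, β₀ ≤ a x ∧ a x ≤ β₁)
    (hauint : IntegrableOn (fun x => a x * ‖gradient u x‖ ^ 2) Ω)
    (ω : ℝ → Set (EuclideanSpace ℝ (Fin 2)))
    (atil : ℝ → EuclideanSpace ℝ (Fin 2) → ℝ)
    (util : ℝ → EuclideanSpace ℝ (Fin 2) → ℝ)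
    (hωmeas : ∀ h ∈ Set.Ioc (0:ℝ) 1, MeasurableSet (ω h))
    (hωsub : ∀ h ∈ Set.Ioc (0:ℝ) 1, ω h ⊆ Ω)
    (hωvol : ∀ h ∈ Set.Ioc (0:ℝ) 1, (volume (ω h)).toReal ≤ c₀ * h ^ 2)
    (hatilmeas : ∀ h ∈ Set.Ioc (0:ℝ) 1, Measurable (atil h))
    (hatil_eq : ∀ h ∈ Set.Ioc (0:ℝ) 1, ∀ x ∈ Ω \ ω h, atil h x = a x)
    (hatil_diff : ∀ h ∈ Set.Ioc (0:ℝ) 1, ∀ x ∈ ω h, atil h x - a x = a₀ - a₁)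
    (hatil_bdd : ∀ h ∈ Set.Ioc (0:ℝ) 1, ∀ x ∈ Ω, β₀ ≤ atil h x ∧ atil h x ≤ β₁)
    (hutil : ∀ h ∈ Set.Ioc (0:ℝ) 1, Differentiable ℝ (util h))
    (hint : ∀ h ∈ Set.Ioc (0:ℝ) 1,
        IntegrableOn (fun x => atil h x * ‖gradient (util h) x‖ ^ 2) Ω ∧
        IntegrableOn (fun x => atil h x * ⟪gradient (util h) x, gradient u x⟫) Ω ∧
        IntegrableOn (fun x => a x * ⟪gradient u x, gradient (util h) x⟫) Ω ∧
        IntegrableOn (fun x => ‖gradient (util h) x‖ ^ 2) Ω)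
    (hB1 : ∀ h ∈ Set.Ioc (0:ℝ) 1,
        (∫ x in Ω, a x * ‖gradient u x‖ ^ 2)
          = ∫ x in Ω, atil h x * ⟪gradient (util h) x, gradient u x⟫)
    (hB2 : ∀ h ∈ Set.Ioc (0:ℝ) 1,
        (∫ x in Ω, a x * ⟪gradient u x, gradient (util h) x⟫)
          = ∫ x in Ω, atil h x * ‖gradient (util h) x‖ ^ 2) :
    ∃ C : ℝ, 0 ≤ C ∧ ∀ h ∈ Set.Ioc (0:ℝ) 1,
      |(∫ x in Ω, a x * ‖gradient u x‖ ^ 2)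
          - ∫ x in Ω, atil h x * ‖gradient (util h) x‖ ^ 2| ≤ C * h ^ 2 :=
  stmt_8_general Ω hΩmeas hΩfin a β₀ β₁ hβ₀ c₀ M a₀ a₁ hc₀ u hM huint hauint ω atil util hωmeas
    hωsub hωvol hatilmeas hatil_eq hatil_diff hatil_bdd hint hB1 hB2
end

section
/- Let 0 < h ≤ 1, 0 < p ≤ 1 and c₁, c₂, c₃, c₄ ≥ 0. Let u, ũ, u_h : ℝ² → ℝ be differentiable and suppose: (i) ‖u − ũ‖_E ≤ c₁ h; (ii) ‖ũ − u_h‖_Ẽ ≤ c₂ h^p; (iii) |‖ũ − u_h‖_E² − ‖ũ − u_h‖_Ẽ²| ≤ c₃ h²; (iv) the Galerkin orthogonality identity ‖ũ − u_h‖_Ẽ² = ‖ũ‖_Ẽ² − ‖u_h‖_Ẽ²; (v) |‖u‖_E² − ‖ũ‖_Ẽ²| ≤ c₄ h². Then ‖u − u_h‖_E² ≤ |‖u‖_E² − ‖u_h‖_Ẽ²| + C h^{1+p}, where C := 2c₁(c₂ + √c₃) + c₁² + c₃ + c₄. -/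
open MeasureTheory

/-- The energy norm `‖v‖ = (∫_Ω a ‖∇v‖² dx)^{1/2}` associated with a coefficient
function `a` on the set `Ω`. -/
noncomputable def energyNorm (Ω : Set (EuclideanSpace ℝ (Fin 2)))
    (a : EuclideanSpace ℝ (Fin 2) → ℝ) (v : EuclideanSpace ℝ (Fin 2) → ℝ) : ℝ :=
  Real.sqrt (∫ x in Ω, a x * ‖gradient v x‖ ^ 2)

/-!
Split `u - u_h = (u - ũ) + (ũ - u_h)`. The weighted energy norm satisfies the triangle inequality
(Cauchy–Schwarz for the weighted form, via the discriminant of `t ↦ ∫ a ‖∇v + t ∇w‖²`), so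
`‖u - u_h‖_E² ≤ ‖u - ũ‖_E² + 2 ‖u - ũ‖_E ‖ũ - u_h‖_E + ‖ũ - u_h‖_E²`. The first term is `O(h²)`;
(ii) and (iii) give `‖ũ - u_h‖_E ≤ (c₂ + √c₃) h^p`, so the cross term is `O(h^{1+p})`; and (iii),
(iv), (v) turn the last term into `‖u‖_E² - ‖u_h‖_Ẽ² + O(h²)`. Finally `h² ≤ h^{1+p}` as `h, p ≤ 1`.
-/

open scoped InnerProductSpace

theorem gradient_add {F : Type*} [NormedAddCommGroup F] [InnerProductSpace ℝ F] [CompleteSpace F]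
    {f g : F → ℝ} {x : F} (hf : DifferentiableAt ℝ f x) (hg : DifferentiableAt ℝ g x) :
    gradient (f + g) x = gradient f x + gradient g x := by
  simp only [gradient, fderiv_add hf hg, map_add]

section WeightedL2

variable {α E : Type*} [MeasurableSpace α] {μ : Measure α}
  [NormedAddCommGroup E] [InnerProductSpace ℝ E] {w : α → ℝ} {f g : α → E}

theorem integrable_weight_mul_inner
    (hf : Integrable (fun x ↦ w x * ‖f x‖ ^ 2) μ) (hg : Integrable (fun x ↦ w x * ‖g x‖ ^ 2) μ)
    (hfg : Integrable (fun x ↦ w x * ‖f x + g x‖ ^ 2) μ) :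
    Integrable (fun x ↦ w x * ⟪f x, g x⟫_ℝ) μ := by
  have hpolar : (fun x ↦ w x * ⟪f x, g x⟫_ℝ)
      = fun x ↦ (w x * ‖f x + g x‖ ^ 2 - w x * ‖f x‖ ^ 2 - w x * ‖g x‖ ^ 2) / 2 := by
    ext x; rw [norm_add_sq_real]; ring
  rw [hpolar]
  exact ((hfg.sub hf).sub hg).div_const 2

theorem integral_weight_mul_inner_le (hw : 0 ≤ᵐ[μ] w)
    (hf : Integrable (fun x ↦ w x * ‖f x‖ ^ 2) μ) (hg : Integrable (fun x ↦ w x * ‖g x‖ ^ 2) μ)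
    (hfg : Integrable (fun x ↦ w x * ⟪f x, g x⟫_ℝ) μ) :
    ∫ x, w x * ⟪f x, g x⟫_ℝ ∂μ
      ≤ √(∫ x, w x * ‖f x‖ ^ 2 ∂μ) * √(∫ x, w x * ‖g x‖ ^ 2 ∂μ) := by
  set A := ∫ x, w x * ‖f x‖ ^ 2 ∂μ
  set B := ∫ x, w x * ‖g x‖ ^ 2 ∂μ
  set C := ∫ x, w x * ⟪f x, g x⟫_ℝ ∂μ
  have hA : 0 ≤ A := integral_nonneg_of_ae (hw.mono fun x hx ↦ mul_nonneg hx (sq_nonneg _))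
  -- `t ↦ ∫ w ‖f + t g‖²` is a nonnegative quadratic polynomial
  have hquad : ∀ t : ℝ, 0 ≤ B * (t * t) + (2 * C) * t + A := by
    intro t
    have hexpand : B * (t * t) + (2 * C) * t + A
        = ∫ x, (t * t) * (w x * ‖g x‖ ^ 2) + (2 * t) * (w x * ⟪f x, g x⟫_ℝ)
            + w x * ‖f x‖ ^ 2 ∂μ := by
      rw [integral_add ?_ hf, integral_add (hg.const_mul _) (hfg.const_mul _),
        integral_const_mul, integral_const_mul]
      · ring
      · exact (hg.const_mul _).add (hfg.const_mul _)
    rw [hexpand]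
    refine integral_nonneg_of_ae (hw.mono fun x hx ↦ ?_)
    have hsq : (t * t) * (w x * ‖g x‖ ^ 2) + (2 * t) * (w x * ⟪f x, g x⟫_ℝ) + w x * ‖f x‖ ^ 2
        = w x * ‖f x + t • g x‖ ^ 2 := by
      rw [norm_add_sq_real, inner_smul_right, norm_smul, Real.norm_eq_abs, mul_pow, sq_abs]
      ring
    rw [Pi.zero_apply] at hx
    simp only [Pi.zero_apply, hsq]
    positivity
  have hC : C ^ 2 ≤ A * B := by
    have := discrim_le_zero hquad
    rw [discrim] at this
    linarith
  calc C ≤ |C| := le_abs_self C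
    _ ≤ √(A * B) := Real.abs_le_sqrt hC
    _ = √A * √B := Real.sqrt_mul hA B

theorem sqrt_integral_weight_mul_norm_add_sq_le (hw : 0 ≤ᵐ[μ] w)
    (hf : Integrable (fun x ↦ w x * ‖f x‖ ^ 2) μ) (hg : Integrable (fun x ↦ w x * ‖g x‖ ^ 2) μ)
    (hfg : Integrable (fun x ↦ w x * ‖f x + g x‖ ^ 2) μ) :
    √(∫ x, w x * ‖f x + g x‖ ^ 2 ∂μ)
      ≤ √(∫ x, w x * ‖f x‖ ^ 2 ∂μ) + √(∫ x, w x * ‖g x‖ ^ 2 ∂μ) := by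
  have hinner := integrable_weight_mul_inner hf hg hfg
  have hexpand : ∫ x, w x * ‖f x + g x‖ ^ 2 ∂μ
      = ∫ x, w x * ‖f x‖ ^ 2 ∂μ + 2 * ∫ x, w x * ⟪f x, g x⟫_ℝ ∂μ + ∫ x, w x * ‖g x‖ ^ 2 ∂μ := by
    rw [← integral_const_mul, ← integral_add hf (hinner.const_mul 2), ← integral_add _ hg]
    · congr 1 with x
      rw [norm_add_sq_real]; ring
    · exact hf.add (hinner.const_mul 2)
  have hA : 0 ≤ ∫ x, w x * ‖f x‖ ^ 2 ∂μ :=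
    integral_nonneg_of_ae (hw.mono fun x hx ↦ mul_nonneg hx (sq_nonneg _))
  have hB : 0 ≤ ∫ x, w x * ‖g x‖ ^ 2 ∂μ :=
    integral_nonneg_of_ae (hw.mono fun x hx ↦ mul_nonneg hx (sq_nonneg _))
  rw [Real.sqrt_le_left (by positivity), hexpand, add_sq, Real.sq_sqrt hA, Real.sq_sqrt hB]
  nlinarith [integral_weight_mul_inner_le hw hf hg hinner]

end WeightedL2

theorem energyNorm_add_le {Ω : Set (EuclideanSpace ℝ (Fin 2))} {a : EuclideanSpace ℝ (Fin 2) → ℝ}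
    (hΩ : MeasurableSet Ω) (ha : ∀ x ∈ Ω, 0 ≤ a x) {v w : EuclideanSpace ℝ (Fin 2) → ℝ}
    (hv : Differentiable ℝ v) (hw : Differentiable ℝ w)
    (hintv : IntegrableOn (fun x ↦ a x * ‖gradient v x‖ ^ 2) Ω)
    (hintw : IntegrableOn (fun x ↦ a x * ‖gradient w x‖ ^ 2) Ω)
    (hintvw : IntegrableOn (fun x ↦ a x * ‖gradient (v + w) x‖ ^ 2) Ω) :
    energyNorm Ω a (v + w) ≤ energyNorm Ω a v + energyNorm Ω a w := by
  have hgrad : ∀ x, gradient (v + w) x = gradient v x + gradient w x :=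
    fun x ↦ gradient_add (hv x) (hw x)
  simp only [hgrad] at hintvw
  simp only [energyNorm, hgrad]
  exact sqrt_integral_weight_mul_norm_add_sq_le (ae_restrict_of_forall_mem hΩ ha) hintv hintw hintvw

theorem le_add_sqrt_mul_of_sq_sub_sq_le {x y c h : ℝ} (hy : 0 ≤ y) (hc : 0 ≤ c)
    (hh : 0 ≤ h) (hxy : x ^ 2 - y ^ 2 ≤ c * h ^ 2) : x ≤ y + √c * h := by
  have hs : 0 ≤ √c * h := by positivity
  refine le_of_sq_le_sq ?_ (by positivity)
  nlinarith [Real.sq_sqrt hc]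

theorem stmt_9_general
    (Ω : Set (EuclideanSpace ℝ (Fin 2)))
    (hΩmeas : MeasurableSet Ω)
    (a atil : EuclideanSpace ℝ (Fin 2) → ℝ)
    (ha_nonneg : ∀ x ∈ Ω, 0 ≤ a x)
    (h p c₁ c₂ c₃ c₄ : ℝ)
    (hh0 : 0 < h) (hh1 : h ≤ 1) (hp1 : p ≤ 1)
    (hc₃ : 0 ≤ c₃) (hc₄ : 0 ≤ c₄)
    (u util uh : EuclideanSpace ℝ (Fin 2) → ℝ)
    (hu : Differentiable ℝ u) (hutil : Differentiable ℝ util) (huh : Differentiable ℝ uh)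
    (hint4 : IntegrableOn (fun x => a x * ‖gradient (u - util) x‖ ^ 2) Ω)
    (hint5 : IntegrableOn (fun x => a x * ‖gradient (util - uh) x‖ ^ 2) Ω)
    (hint7 : IntegrableOn (fun x => a x * ‖gradient (u - uh) x‖ ^ 2) Ω)
    (h1 : energyNorm Ω a (u - util) ≤ c₁ * h)
    (h2 : energyNorm Ω atil (util - uh) ≤ c₂ * h ^ p)
    (h3 : |energyNorm Ω a (util - uh) ^ 2 - energyNorm Ω atil (util - uh) ^ 2| ≤ c₃ * h ^ 2)
    (h4 : energyNorm Ω atil (util - uh) ^ 2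
        = energyNorm Ω atil util ^ 2 - energyNorm Ω atil uh ^ 2)
    (h5 : |energyNorm Ω a u ^ 2 - energyNorm Ω atil util ^ 2| ≤ c₄ * h ^ 2) :
    energyNorm Ω a (u - uh) ^ 2
      ≤ |energyNorm Ω a u ^ 2 - energyNorm Ω atil uh ^ 2|
        + (2 * c₁ * (c₂ + Real.sqrt c₃) + c₁ ^ 2 + c₃ + c₄) * h ^ (1 + p) := by
  set e₁ := energyNorm Ω a (u - util)
  set e₂ := energyNorm Ω a (util - uh)
  have he₁ : 0 ≤ e₁ := Real.sqrt_nonneg _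
  have he₂ : 0 ≤ e₂ := Real.sqrt_nonneg _
  have htri : energyNorm Ω a (u - uh) ≤ e₁ + e₂ := by
    have := energyNorm_add_le hΩmeas ha_nonneg (hu.sub hutil) (hutil.sub huh) hint4 hint5
      (by rwa [sub_add_sub_cancel])
    rwa [sub_add_sub_cancel] at this
  have hhp : h ≤ h ^ p := Real.self_le_rpow_of_le_one hh0.le hh1 hp1
  have hh2 : h ^ 2 ≤ h ^ (1 + p) := by
    rw [← Real.rpow_natCast]
    exact Real.rpow_le_rpow_of_exponent_ge hh0 hh1 (by push_cast; linarith)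
  have he₂_le : e₂ ≤ (c₂ + √c₃) * h ^ p := by
    have := le_add_sqrt_mul_of_sq_sub_sq_le
      (y := energyNorm Ω atil (util - uh)) (Real.sqrt_nonneg _) hc₃ hh0.le (abs_le.mp h3).2
    linarith [mul_le_mul_of_nonneg_left hhp (Real.sqrt_nonneg c₃)]
  have he₂_sq : e₂ ^ 2 ≤ energyNorm Ω a u ^ 2 - energyNorm Ω atil uh ^ 2 + (c₃ + c₄) * h ^ 2 := by
    linarith [(abs_le.mp h3).2, (abs_le.mp h5).1]
  have hh1p : h ^ (1 + p) = h * h ^ p := by rw [Real.rpow_add hh0, Real.rpow_one]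
  have hcross : e₁ * e₂ ≤ c₁ * (c₂ + √c₃) * h ^ (1 + p) :=
    calc e₁ * e₂ ≤ c₁ * h * ((c₂ + √c₃) * h ^ p) := mul_le_mul h1 he₂_le he₂ (he₁.trans h1)
      _ = c₁ * (c₂ + √c₃) * h ^ (1 + p) := by rw [hh1p]; ring
  calc energyNorm Ω a (u - uh) ^ 2 ≤ (e₁ + e₂) ^ 2 := pow_le_pow_left₀ (Real.sqrt_nonneg _) htri 2
    _ = e₁ ^ 2 + 2 * (e₁ * e₂) + e₂ ^ 2 := by ring
    _ ≤ c₁ ^ 2 * h ^ 2 + 2 * (c₁ * (c₂ + √c₃) * h ^ (1 + p))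
        + (energyNorm Ω a u ^ 2 - energyNorm Ω atil uh ^ 2 + (c₃ + c₄) * h ^ 2) := by
        gcongr
        rw [← mul_pow]
        exact pow_le_pow_left₀ he₁ h1 2
    _ ≤ _ := by
        linarith [le_abs_self (energyNorm Ω a u ^ 2 - energyNorm Ω atil uh ^ 2),
          mul_le_mul_of_nonneg_left hh2 (sq_nonneg c₁),
          mul_le_mul_of_nonneg_left hh2 (add_nonneg hc₃ hc₄)]

theorem stmt_9
    (Ω : Set (EuclideanSpace ℝ (Fin 2)))
    (hΩmeas : MeasurableSet Ω) (hΩfin : volume Ω < ⊤)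
    (a atil : EuclideanSpace ℝ (Fin 2) → ℝ)
    (hameas : Measurable a) (hatilmeas : Measurable atil)
    (ha_nonneg : ∀ x ∈ Ω, 0 ≤ a x) (hatil_nonneg : ∀ x ∈ Ω, 0 ≤ atil x)
    (h p c₁ c₂ c₃ c₄ : ℝ)
    (hh0 : 0 < h) (hh1 : h ≤ 1) (hp0 : 0 < p) (hp1 : p ≤ 1)
    (hc₁ : 0 ≤ c₁) (hc₂ : 0 ≤ c₂) (hc₃ : 0 ≤ c₃) (hc₄ : 0 ≤ c₄)
    (u util uh : EuclideanSpace ℝ (Fin 2) → ℝ)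
    (hu : Differentiable ℝ u) (hutil : Differentiable ℝ util) (huh : Differentiable ℝ uh)
    (hint1 : IntegrableOn (fun x => a x * ‖gradient u x‖ ^ 2) Ω)
    (hint2 : IntegrableOn (fun x => atil x * ‖gradient util x‖ ^ 2) Ω)
    (hint3 : IntegrableOn (fun x => atil x * ‖gradient uh x‖ ^ 2) Ω)
    (hint4 : IntegrableOn (fun x => a x * ‖gradient (u - util) x‖ ^ 2) Ω)
    (hint5 : IntegrableOn (fun x => a x * ‖gradient (util - uh) x‖ ^ 2) Ω)
    (hint6 : IntegrableOn (fun x => atil x * ‖gradient (util - uh) x‖ ^ 2) Ω)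
    (hint7 : IntegrableOn (fun x => a x * ‖gradient (u - uh) x‖ ^ 2) Ω)
    (h1 : energyNorm Ω a (u - util) ≤ c₁ * h)
    (h2 : energyNorm Ω atil (util - uh) ≤ c₂ * h ^ p)
    (h3 : |energyNorm Ω a (util - uh) ^ 2 - energyNorm Ω atil (util - uh) ^ 2| ≤ c₃ * h ^ 2)
    (h4 : energyNorm Ω atil (util - uh) ^ 2
        = energyNorm Ω atil util ^ 2 - energyNorm Ω atil uh ^ 2)
    (h5 : |energyNorm Ω a u ^ 2 - energyNorm Ω atil util ^ 2| ≤ c₄ * h ^ 2) :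
    energyNorm Ω a (u - uh) ^ 2
      ≤ |energyNorm Ω a u ^ 2 - energyNorm Ω atil uh ^ 2|
        + (2 * c₁ * (c₂ + Real.sqrt c₃) + c₁ ^ 2 + c₃ + c₄) * h ^ (1 + p) :=
  stmt_9_general Ω hΩmeas a atil ha_nonneg h p c₁ c₂ c₃ c₄ hh0 hh1 hp1 hc₃ hc₄ u util uh hu hutil
    huh hint4 hint5 hint7 h1 h2 h3 h4 h5
end

section
/- Let 0 < h ≤ 1, 0 < p ≤ 1 and c₁, c₂, c₃, c₄ ≥ 0. Let u, ũ, u_h : ℝ² → ℝ be differentiable and suppose: (i) ‖u − ũ‖_E ≤ c₁ h; (ii) ‖ũ − u_h‖_Ẽ ≤ c₂ h^p; (iii) |‖ũ − u_h‖_E² − ‖ũ − u_h‖_Ẽ²| ≤ c₃ h²; (iv) the Galerkin orthogonality identity ‖ũ − u_h‖_Ẽ² = ‖ũ‖_Ẽ² − ‖u_h‖_Ẽ²; (v) |‖u‖_E² − ‖ũ‖_Ẽ²| ≤ c₄ h². Then |‖u‖_E² − ‖u_h‖_Ẽ²| ≤ ‖u − u_h‖_E² + C h^{1+p}, where C :=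 3c₁² + 2c₁c₂ + 2c₁√c₃ + c₃ + c₄. -/
/-!
The energy norm is the `L²(Ω)` norm of `√a · |∇v|`, so it satisfies the triangle inequality
(Minkowski). Galerkin orthogonality turns `‖u‖²_E - ‖u_h‖²_Ẽ` into
`(‖u‖²_E - ‖ũ‖²_Ẽ) + ‖ũ - u_h‖²_Ẽ`; the first term is `O(h²)`. Writing `A = ‖u - ũ‖_E`,
`B = ‖ũ - u_h‖_E` and `D = ‖u - u_h‖_E`, the two triangle inequalities `B ≤ D + A`,
`D ≤ A + B` give `B² ≤ D² + 3A² + 2AB`, and `A = O(h)`, `B ≤ ‖ũ - u_h‖_Ẽ + √c₃ h = O(h^p)`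
bound the remainder by `O(h^{1+p})`, since `h² ≤ h^{1+p}` for `h ≤ 1`.
-/

open MeasureTheory

namespace MeasureTheory

variable {α E F G : Type*} [MeasurableSpace α] {μ : Measure α}
  [NormedAddCommGroup E] [NormedAddCommGroup F] [NormedAddCommGroup G]

theorem MemLp.toReal_eLpNorm_two {f : α → E} (hf : MemLp f 2 μ) :
    (eLpNorm f 2 μ).toReal = √(∫ x, ‖f x‖ ^ 2 ∂μ) := by
  rw [hf.eLpNorm_eq_integral_rpow_norm two_ne_zero ENNReal.ofNat_ne_top,
    ENNReal.toReal_ofReal (by positivity), Real.sqrt_eq_rpow]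
  norm_num

theorem sqrt_integral_norm_sq_le_add {f : α → E} {g : α → F} {k : α → G}
    (hf : MemLp f 2 μ) (hg : MemLp g 2 μ) (hk : MemLp k 2 μ)
    (hle : ∀ᵐ x ∂μ, ‖k x‖ ≤ ‖f x‖ + ‖g x‖) :
    √(∫ x, ‖k x‖ ^ 2 ∂μ) ≤ √(∫ x, ‖f x‖ ^ 2 ∂μ) + √(∫ x, ‖g x‖ ^ 2 ∂μ) := by
  have hsum : eLpNorm k 2 μ ≤ eLpNorm f 2 μ + eLpNorm g 2 μ := calc
    eLpNorm k 2 μ ≤ eLpNorm (fun x => ‖f x‖ + ‖g x‖) 2 μ := eLpNorm_mono_ae_real hle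
    _ ≤ eLpNorm (fun x => ‖f x‖) 2 μ + eLpNorm (fun x => ‖g x‖) 2 μ :=
      eLpNorm_add_le hf.1.norm hg.1.norm one_le_two
    _ = eLpNorm f 2 μ + eLpNorm g 2 μ := by rw [eLpNorm_norm, eLpNorm_norm]
  rw [← hf.toReal_eLpNorm_two, ← hg.toReal_eLpNorm_two, ← hk.toReal_eLpNorm_two]
  exact ENNReal.toReal_le_add hsum hf.eLpNorm_ne_top hg.eLpNorm_ne_top

theorem Integrable.memLp_two_sqrt {q : α → ℝ} (hq : Integrable q μ) (hq0 : 0 ≤ᵐ[μ] q) :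
    MemLp (fun x => √(q x)) 2 μ :=
  (memLp_two_iff_integrable_sq (Real.continuous_sqrt.comp_aestronglyMeasurable hq.1)).2 <|
    hq.congr <| hq0.mono fun _ hx => (Real.sq_sqrt hx).symm

theorem sqrt_integral_mul_norm_sq_le_add {w : α → ℝ} {φ ψ χ : α → E} (hw : 0 ≤ᵐ[μ] w)
    (hφ : Integrable (fun x => w x * ‖φ x‖ ^ 2) μ) (hψ : Integrable (fun x => w x * ‖ψ x‖ ^ 2) μ)
    (hχ : Integrable (fun x => w x * ‖χ x‖ ^ 2) μ) (hle : ∀ᵐ x ∂μ, ‖χ x‖ ≤ ‖φ x‖ + ‖ψ x‖) :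
    √(∫ x, w x * ‖χ x‖ ^ 2 ∂μ) ≤ √(∫ x, w x * ‖φ x‖ ^ 2 ∂μ) + √(∫ x, w x * ‖ψ x‖ ^ 2 ∂μ) := by
  have h0 : ∀ ζ : α → E, 0 ≤ᵐ[μ] fun x => w x * ‖ζ x‖ ^ 2 := fun ζ =>
    hw.mono fun _ hx => mul_nonneg hx (sq_nonneg _)
  have hsq : ∀ ζ : α → E, ∫ x, ‖√(w x * ‖ζ x‖ ^ 2)‖ ^ 2 ∂μ = ∫ x, w x * ‖ζ x‖ ^ 2 ∂μ :=
    fun ζ => integral_congr_ae <| (h0 ζ).mono fun x (hx : 0 ≤ w x * ‖ζ x‖ ^ 2) => by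
      simp only [Real.norm_eq_abs, sq_abs, Real.sq_sqrt hx]
  rw [← hsq φ, ← hsq ψ, ← hsq χ]
  refine sqrt_integral_norm_sq_le_add (hφ.memLp_two_sqrt (h0 φ)) (hψ.memLp_two_sqrt (h0 ψ))
    (hχ.memLp_two_sqrt (h0 χ)) ?_
  filter_upwards [hw, hle] with x hwx hx
  simp only [Real.sqrt_mul hwx, Real.sqrt_sq (norm_nonneg _), Real.norm_eq_abs, abs_mul,
    abs_norm, abs_of_nonneg (Real.sqrt_nonneg (w x)), ← mul_add]
  exact mul_le_mul_of_nonneg_left hx (Real.sqrt_nonneg _)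

end MeasureTheory

theorem gradient_sub {𝕜 F : Type*} [RCLike 𝕜] [NormedAddCommGroup F] [InnerProductSpace 𝕜 F]
    [CompleteSpace F] {f g : F → 𝕜} {x : F} (hf : DifferentiableAt 𝕜 f x)
    (hg : DifferentiableAt 𝕜 g x) : gradient (f - g) x = gradient f x - gradient g x := by
  rw [gradient, gradient, gradient, fderiv_sub hf hg, map_sub]

theorem energyNorm_le_add {Ω : Set (EuclideanSpace ℝ (Fin 2))} (hΩ : MeasurableSet Ω)
    {a : EuclideanSpace ℝ (Fin 2) → ℝ} (ha : ∀ x ∈ Ω, 0 ≤ a x)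
    {f g k : EuclideanSpace ℝ (Fin 2) → ℝ}
    (hf : IntegrableOn (fun x => a x * ‖gradient f x‖ ^ 2) Ω)
    (hg : IntegrableOn (fun x => a x * ‖gradient g x‖ ^ 2) Ω)
    (hk : IntegrableOn (fun x => a x * ‖gradient k x‖ ^ 2) Ω)
    (hle : ∀ x ∈ Ω, ‖gradient k x‖ ≤ ‖gradient f x‖ + ‖gradient g x‖) :
    energyNorm Ω a k ≤ energyNorm Ω a f + energyNorm Ω a g :=
  sqrt_integral_mul_norm_sq_le_add (ae_restrict_of_forall_mem hΩ ha) hf hg hk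
    (ae_restrict_of_forall_mem hΩ hle)

theorem le_add_sqrt_mul_of_sq_le_sq_add {x y c h : ℝ} (hy : 0 ≤ y) (hc : 0 ≤ c) (hh : 0 ≤ h)
    (hxy : x ^ 2 ≤ y ^ 2 + c * h ^ 2) : x ≤ y + √c * h := by
  nlinarith [Real.sq_sqrt hc, Real.sqrt_nonneg c, mul_nonneg (Real.sqrt_nonneg c) hh]

theorem abs_sq_sub_sq_le_of_galerkin {U Ut Uh A B Bt D h p c₁ c₂ c₃ c₄ : ℝ}
    (hh0 : 0 < h) (hh1 : h ≤ 1) (hp1 : p ≤ 1)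
    (hc₁ : 0 ≤ c₁) (hc₂ : 0 ≤ c₂) (hc₃ : 0 ≤ c₃) (hc₄ : 0 ≤ c₄)
    (hA0 : 0 ≤ A) (hB0 : 0 ≤ B) (hBt0 : 0 ≤ Bt) (hBDA : B ≤ D + A) (hDAB : D ≤ A + B)
    (h1 : A ≤ c₁ * h) (h2 : Bt ≤ c₂ * h ^ p) (h3 : |B ^ 2 - Bt ^ 2| ≤ c₃ * h ^ 2)
    (h4 : Bt ^ 2 = Ut ^ 2 - Uh ^ 2) (h5 : |U ^ 2 - Ut ^ 2| ≤ c₄ * h ^ 2) :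
    |U ^ 2 - Uh ^ 2|
      ≤ D ^ 2 + (3 * c₁ ^ 2 + 2 * c₁ * c₂ + 2 * c₁ * √c₃ + c₃ + c₄) * h ^ (1 + p) := by
  have hB2 : B ^ 2 ≤ D ^ 2 + 3 * A ^ 2 + 2 * (A * B) := by nlinarith
  have hB : B ≤ c₂ * h ^ p + √c₃ * h := by
    have := le_add_sqrt_mul_of_sq_le_sq_add (x := B) hBt0 hc₃ hh0.le
      (by linarith [(abs_le.1 h3).2])
    linarith
  have hAB : A * B ≤ c₁ * c₂ * h ^ (1 + p) + c₁ * √c₃ * h ^ 2 := by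
    rw [Real.rpow_add hh0, Real.rpow_one]
    linarith [mul_le_mul h1 hB hB0 (by positivity)]
  have hA2 : A ^ 2 ≤ c₁ ^ 2 * h ^ 2 := by nlinarith
  have hh2 : h ^ 2 ≤ h ^ (1 + p) := by
    have := Real.rpow_le_rpow_of_exponent_ge hh0 hh1 (by linarith : 1 + p ≤ 2)
    rwa [Real.rpow_two] at this
  have hsplit : U ^ 2 - Uh ^ 2 = (U ^ 2 - Ut ^ 2) + Bt ^ 2 := by rw [h4]; ring
  have hK : 0 ≤ 3 * c₁ ^ 2 + 2 * c₁ * √c₃ + c₃ + c₄ := by positivity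
  have hC : 0 ≤ (3 * c₁ ^ 2 + 2 * c₁ * c₂ + 2 * c₁ * √c₃ + c₃) * h ^ (1 + p) := by positivity
  rw [abs_le, hsplit]
  constructor
  · linarith [(abs_le.1 h5).1, mul_le_mul_of_nonneg_left hh2 hc₄, sq_nonneg D, sq_nonneg Bt]
  · linarith [(abs_le.1 h5).2, (abs_le.1 h3).1, mul_le_mul_of_nonneg_left hh2 hK]

theorem stmt_10_general
    (Ω : Set (EuclideanSpace ℝ (Fin 2)))
    (hΩmeas : MeasurableSet Ω)
    (a atil : EuclideanSpace ℝ (Fin 2) → ℝ)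
    (ha_nonneg : ∀ x ∈ Ω, 0 ≤ a x)
    (h p c₁ c₂ c₃ c₄ : ℝ)
    (hh0 : 0 < h) (hh1 : h ≤ 1) (hp1 : p ≤ 1)
    (hc₁ : 0 ≤ c₁) (hc₂ : 0 ≤ c₂) (hc₃ : 0 ≤ c₃) (hc₄ : 0 ≤ c₄)
    (u util uh : EuclideanSpace ℝ (Fin 2) → ℝ)
    (hu : Differentiable ℝ u) (hutil : Differentiable ℝ util) (huh : Differentiable ℝ uh)
    (hint4 : IntegrableOn (fun x => a x * ‖gradient (u - util) x‖ ^ 2) Ω)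
    (hint5 : IntegrableOn (fun x => a x * ‖gradient (util - uh) x‖ ^ 2) Ω)
    (hint7 : IntegrableOn (fun x => a x * ‖gradient (u - uh) x‖ ^ 2) Ω)
    (h1 : energyNorm Ω a (u - util) ≤ c₁ * h)
    (h2 : energyNorm Ω atil (util - uh) ≤ c₂ * h ^ p)
    (h3 : |energyNorm Ω a (util - uh) ^ 2 - energyNorm Ω atil (util - uh) ^ 2| ≤ c₃ * h ^ 2)
    (h4 : energyNorm Ω atil (util - uh) ^ 2
        = energyNorm Ω atil util ^ 2 - energyNorm Ω atil uh ^ 2)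
    (h5 : |energyNorm Ω a u ^ 2 - energyNorm Ω atil util ^ 2| ≤ c₄ * h ^ 2) :
    |energyNorm Ω a u ^ 2 - energyNorm Ω atil uh ^ 2|
      ≤ energyNorm Ω a (u - uh) ^ 2
        + (3 * c₁ ^ 2 + 2 * c₁ * c₂ + 2 * c₁ * Real.sqrt c₃ + c₃ + c₄) * h ^ (1 + p) := by
  have hgrad : ∀ {f g : EuclideanSpace ℝ (Fin 2) → ℝ}, Differentiable ℝ f → Differentiable ℝ g →
      ∀ x, gradient (f - g) x = gradient f x - gradient g x :=
    fun hf hg x => gradient_sub (hf x) (hg x)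
  have hBDA : energyNorm Ω a (util - uh) ≤ energyNorm Ω a (u - uh) + energyNorm Ω a (u - util) :=
    energyNorm_le_add hΩmeas ha_nonneg hint7 hint4 hint5 fun x _ => by
      rw [hgrad hutil huh, hgrad hu huh, hgrad hu hutil, add_comm]
      simpa only [dist_eq_norm] using dist_triangle_left (gradient util x) (gradient uh x) _
  have hDAB : energyNorm Ω a (u - uh) ≤ energyNorm Ω a (u - util) + energyNorm Ω a (util - uh) :=
    energyNorm_le_add hΩmeas ha_nonneg hint4 hint5 hint7 fun x _ => by
      rw [hgrad hutil huh, hgrad hu huh, hgrad hu hutil]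
      exact norm_sub_le_norm_sub_add_norm_sub _ _ _
  exact abs_sq_sub_sq_le_of_galerkin hh0 hh1 hp1 hc₁ hc₂ hc₃ hc₄ (Real.sqrt_nonneg _)
    (Real.sqrt_nonneg _) (Real.sqrt_nonneg _) hBDA hDAB h1 h2 h3 h4 h5

theorem stmt_10
    (Ω : Set (EuclideanSpace ℝ (Fin 2)))
    (hΩmeas : MeasurableSet Ω) (hΩfin : volume Ω < ⊤)
    (a atil : EuclideanSpace ℝ (Fin 2) → ℝ)
    (hameas : Measurable a) (hatilmeas : Measurable atil)
    (ha_nonneg : ∀ x ∈ Ω, 0 ≤ a x) (hatil_nonneg : ∀ x ∈ Ω, 0 ≤ atil x)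
    (h p c₁ c₂ c₃ c₄ : ℝ)
    (hh0 : 0 < h) (hh1 : h ≤ 1) (hp0 : 0 < p) (hp1 : p ≤ 1)
    (hc₁ : 0 ≤ c₁) (hc₂ : 0 ≤ c₂) (hc₃ : 0 ≤ c₃) (hc₄ : 0 ≤ c₄)
    (u util uh : EuclideanSpace ℝ (Fin 2) → ℝ)
    (hu : Differentiable ℝ u) (hutil : Differentiable ℝ util) (huh : Differentiable ℝ uh)
    (hint1 : IntegrableOn (fun x => a x * ‖gradient u x‖ ^ 2) Ω)
    (hint2 : IntegrableOn (fun x => atil x * ‖gradient util x‖ ^ 2) Ω)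
    (hint3 : IntegrableOn (fun x => atil x * ‖gradient uh x‖ ^ 2) Ω)
    (hint4 : IntegrableOn (fun x => a x * ‖gradient (u - util) x‖ ^ 2) Ω)
    (hint5 : IntegrableOn (fun x => a x * ‖gradient (util - uh) x‖ ^ 2) Ω)
    (hint6 : IntegrableOn (fun x => atil x * ‖gradient (util - uh) x‖ ^ 2) Ω)
    (hint7 : IntegrableOn (fun x => a x * ‖gradient (u - uh) x‖ ^ 2) Ω)
    (h1 : energyNorm Ω a (u - util) ≤ c₁ * h)
    (h2 : energyNorm Ω atil (util - uh) ≤ c₂ * h ^ p)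
    (h3 : |energyNorm Ω a (util - uh) ^ 2 - energyNorm Ω atil (util - uh) ^ 2| ≤ c₃ * h ^ 2)
    (h4 : energyNorm Ω atil (util - uh) ^ 2
        = energyNorm Ω atil util ^ 2 - energyNorm Ω atil uh ^ 2)
    (h5 : |energyNorm Ω a u ^ 2 - energyNorm Ω atil util ^ 2| ≤ c₄ * h ^ 2) :
    |energyNorm Ω a u ^ 2 - energyNorm Ω atil uh ^ 2|
      ≤ energyNorm Ω a (u - uh) ^ 2
        + (3 * c₁ ^ 2 + 2 * c₁ * c₂ + 2 * c₁ * Real.sqrt c₃ + c₃ + c₄) * h ^ (1 + p) :=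
  stmt_10_general Ω hΩmeas a atil ha_nonneg h p c₁ c₂ c₃ c₄ hh0 hh1 hp1 hc₁ hc₂ hc₃ hc₄ u util uh hu
    hutil huh hint4 hint5 hint7 h1 h2 h3 h4 h5
end

section
/- Let 0 < q < 1, 0 < B₁ ≤ B₂ with B₂ q < B₁, and 0 < D₁ ≤ D₂ with D₂ q < D₁. Suppose B₁ qⁱ ≤ ‖u − vᵢ‖ ≤ B₂ qⁱ for all i ∈ ℕ and D₁ q^{i−1} ≤ ‖vᵢ − v_{i−1}‖ ≤ D₂ q^{i−1} for all i ≥ 1, and for i ≥ 2 set eᵢ := (1/‖vᵢ − v_{i−1}‖ − 1/‖v_{i−1} − v_{i−2}‖)⁻¹. Then for all i ≥ 2: ‖u − vᵢ‖ ≤ B₂ q² (1/(D₁ q) − 1/D₂) · eᵢ. -/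
theorem stmt_15
    {V : Type*} [NormedAddCommGroup V] [NormedSpace ℝ V]
    (u : V) (v : ℕ → V) (q B₁ B₂ D₁ D₂ : ℝ)
    (hq0 : 0 < q) (hq1 : q < 1)
    (hB₁ : 0 < B₁) (hB : B₁ ≤ B₂) (hBq : B₂ * q < B₁)
    (hD₁ : 0 < D₁) (hD : D₁ ≤ D₂) (hDq : D₂ * q < D₁)
    (hboundB : ∀ i : ℕ, B₁ * q ^ i ≤ ‖u - v i‖ ∧ ‖u - v i‖ ≤ B₂ * q ^ i)
    (hboundD : ∀ i : ℕ, 1 ≤ i →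
      D₁ * q ^ (i - 1) ≤ ‖v i - v (i - 1)‖ ∧ ‖v i - v (i - 1)‖ ≤ D₂ * q ^ (i - 1)) :
    ∀ i : ℕ, 2 ≤ i →
      ‖u - v i‖ ≤ B₂ * q ^ 2 * (1 / (D₁ * q) - 1 / D₂)
        * (1 / ‖v i - v (i - 1)‖ - 1 / ‖v (i - 1) - v (i - 2)‖)⁻¹ := by
  intro i hi
  obtain ⟨k, rfl⟩ := Nat.exists_eq_add_of_le hi
  have h1 := hboundD (2 + k) (by omega)
  have h2 := hboundD (2 + k - 1) (by omega)
  have e1 : 2 + k - 1 = k + 1 := by omega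
  have e2 : 2 + k - 2 = k := by omega
  have e3 : k + 1 - 1 = k := by omega
  rw [e1] at h1 h2
  rw [e3] at h2
  rw [e1, e2]
  set a := ‖v (2 + k) - v (k + 1)‖ with ha_def
  set b := ‖v (k + 1) - v k‖ with hb_def
  have hqk : (0:ℝ) < q ^ k := pow_pos hq0 k
  have ha : 0 < a := lt_of_lt_of_le (by positivity) h1.1
  have hb : 0 < b := lt_of_lt_of_le (by positivity) h2.1
  have hA : 1 / a ≤ 1 / (D₁ * q ^ (k + 1)) :=
    one_div_le_one_div_of_le (by positivity) h1.1
  have hA' : 1 / (D₂ * q ^ (k + 1)) ≤ 1 / a :=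
    one_div_le_one_div_of_le ha h1.2
  have hB' : 1 / (D₂ * q ^ k) ≤ 1 / b :=
    one_div_le_one_div_of_le hb h2.2
  have hB'' : 1 / b ≤ 1 / (D₁ * q ^ k) :=
    one_div_le_one_div_of_le (by positivity) h2.1
  have hD₂ : 0 < D₂ := hD₁.trans_le hD
  have hB₂ : 0 < B₂ := hB₁.trans_le hB
  have hlt : 1 / (D₁ * q ^ k) < 1 / (D₂ * q ^ (k + 1)) := by
    apply one_div_lt_one_div_of_lt (by positivity)
    have : D₂ * q * q ^ k < D₁ * q ^ k := by nlinarith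
    calc D₂ * q ^ (k + 1) = D₂ * q * q ^ k := by ring
      _ < D₁ * q ^ k := this
  have hpos : 0 < 1 / a - 1 / b := by linarith
  have key1 : 1 / (D₁ * q ^ (k + 1)) * q ^ k = 1 / (D₁ * q) := by
    field_simp
    ring
  have key2 : 1 / (D₂ * q ^ k) * q ^ k = 1 / D₂ := by
    rw [eq_div_iff hD₂.ne']
    field_simp
  have hup : q ^ k * (1 / a - 1 / b) ≤ 1 / (D₁ * q) - 1 / D₂ := by
    have h3 : q ^ k * (1 / a) ≤ 1 / (D₁ * q) := by
      calc q ^ k * (1 / a) ≤ q ^ k * (1 / (D₁ * q ^ (k + 1))) := by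
            exact mul_le_mul_of_nonneg_left hA hqk.le
        _ = 1 / (D₁ * q) := by rw [mul_comm]; exact key1
    have h4 : 1 / D₂ ≤ q ^ k * (1 / b) := by
      calc (1:ℝ) / D₂ = 1 / (D₂ * q ^ k) * q ^ k := key2.symm
        _ ≤ 1 / b * q ^ k := mul_le_mul_of_nonneg_right hB' hqk.le
        _ = q ^ k * (1 / b) := by ring
    nlinarith
  have hfin : B₂ * q ^ (2 + k) ≤ B₂ * q ^ 2 * (1 / (D₁ * q) - 1 / D₂)
      * (1 / a - 1 / b)⁻¹ := by
    rw [← div_eq_mul_inv, le_div_iff₀ hpos]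
    have h5 := mul_le_mul_of_nonneg_left hup (by positivity : (0:ℝ) ≤ B₂ * q ^ 2)
    calc B₂ * q ^ (2 + k) * (1 / a - 1 / b)
        = B₂ * q ^ 2 * (q ^ k * (1 / a - 1 / b)) := by rw [pow_add]; ring
      _ ≤ _ := h5
  calc ‖u - v (2 + k)‖ ≤ B₂ * q ^ (2 + k) := (hboundB (2 + k)).2
    _ ≤ _ := hfin
end

section
/- Let H be a real inner product space, S₁ and S₂ finite-dimensional subspaces of H with orthogonal projections P₁ and P₂, and let c := sup over nonzero s₁ ∈ S₁ and nonzero s₂ ∈ S₂ of |⟨s₁, s₂⟩| / (‖s₁‖ ‖s₂‖). Then for every e ∈ S₁ + S₂ with ⟨e, s⟩ = 0 for all s ∈ S₂, the error after one full block Gauss–Seidel sweep satisfies ‖(e − P₁ e) − P₂(e − P₁ e)‖ ≤ c² ‖e‖. -/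
open scoped RealInnerProductSpace

/-! If `x ∈ S₁ ⊔ S₂` is orthogonal to `S₁`, write `x = s₁ + s₂`. Then `⟪s₁, s₂⟫ = -‖s₁‖²` gives
`‖s₁‖ ≤ c ‖s₂‖`, and with `‖s₂‖² = ‖x‖² + ‖s₁‖²` this yields `(1 - c²) ‖s₂‖² ≤ ‖x‖²`. Since also
`‖x‖² = ⟪P₂ x, s₂⟫ ≤ ‖P₂ x‖ ‖s₂‖`, we get `(1 - c²) ‖x‖² ≤ ‖P₂ x‖²`, i.e. `‖x - P₂ x‖ ≤ c ‖x‖`.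
Each half of the sweep is such a step: first for `e ⊥ S₂` with the roles of `S₁` and `S₂`
exchanged, then for `e - P₁ e ⊥ S₁`. -/

namespace Submodule

variable {H : Type*} [NormedAddCommGroup H] [InnerProductSpace ℝ H]

noncomputable def cosAngle (S₁ S₂ : Submodule ℝ H) : ℝ :=
  ⨆ p : {x : H // x ∈ S₁ ∧ x ≠ 0} × {y : H // y ∈ S₂ ∧ y ≠ 0},
    |⟪(p.1 : H), (p.2 : H)⟫| / (‖(p.1 : H)‖ * ‖(p.2 : H)‖)

theorem cosAngle_nonneg (S₁ S₂ : Submodule ℝ H) : 0 ≤ cosAngle S₁ S₂ :=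
  Real.iSup_nonneg fun _ => by positivity

theorem abs_inner_le_cosAngle_mul {S₁ S₂ : Submodule ℝ H} {s₁ s₂ : H} (h₁ : s₁ ∈ S₁)
    (h₂ : s₂ ∈ S₂) : |⟪s₁, s₂⟫| ≤ cosAngle S₁ S₂ * (‖s₁‖ * ‖s₂‖) := by
  rcases eq_or_ne s₁ 0 with rfl | hs₁
  · simp
  rcases eq_or_ne s₂ 0 with rfl | hs₂
  · simp
  have hbdd : BddAbove (Set.range fun p : {x : H // x ∈ S₁ ∧ x ≠ 0} ×
      {y : H // y ∈ S₂ ∧ y ≠ 0} => |⟪(p.1 : H), (p.2 : H)⟫| / (‖(p.1 : H)‖ * ‖(p.2 : H)‖)) := by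
    refine ⟨1, ?_⟩
    rintro _ ⟨p, rfl⟩
    exact div_le_one_of_le₀ (abs_real_inner_le_norm _ _) (by positivity)
  rw [← div_le_iff₀ (by positivity)]
  exact le_ciSup hbdd (⟨⟨s₁, h₁, hs₁⟩, ⟨s₂, h₂, hs₂⟩⟩ : _ × _)

theorem norm_sub_starProjection_le_of_mem_sup_orthogonal {S₁ S₂ : Submodule ℝ H}
    [S₂.HasOrthogonalProjection] {c : ℝ} (hc₀ : 0 ≤ c)
    (hc : ∀ s₁ ∈ S₁, ∀ s₂ ∈ S₂, |⟪s₁, s₂⟫| ≤ c * (‖s₁‖ * ‖s₂‖))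
    {x : H} (hx : x ∈ S₁ ⊔ S₂) (hx₁ : x ∈ S₁ᗮ) :
    ‖x - S₂.starProjection x‖ ≤ c * ‖x‖ := by
  obtain ⟨s₁, hs₁, s₂, hs₂, hsum⟩ := mem_sup.1 hx
  have hxs₁ : ⟪x, s₁⟫ = 0 := (mem_orthogonal' S₁ x).1 hx₁ s₁ hs₁
  have hs₂_eq : s₂ = x - s₁ := by rw [← hsum]; abel
  have hcross : ⟪s₁, s₂⟫ = -‖s₁‖ ^ 2 := by
    rw [hs₂_eq, inner_sub_right, real_inner_comm, hxs₁, real_inner_self_eq_norm_sq, zero_sub]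
  have hs₁_le : ‖s₁‖ ≤ c * ‖s₂‖ := by
    have h := hc s₁ hs₁ s₂ hs₂
    rw [hcross, abs_neg, abs_of_nonneg (by positivity)] at h
    rcases (norm_nonneg s₁).eq_or_lt with h0 | hpos
    · rw [← h0]; positivity
    · nlinarith
  have hpyth : ‖s₂‖ ^ 2 = ‖x‖ ^ 2 + ‖s₁‖ ^ 2 := by
    rw [hs₂_eq, norm_sub_sq_real, hxs₁]; ring
  have hx_sq : ‖x‖ ^ 2 ≤ ‖S₂.starProjection x‖ * ‖s₂‖ := calc
    ‖x‖ ^ 2 = ⟪x, s₂⟫ := by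
      rw [← real_inner_self_eq_norm_sq]
      nth_rw 2 [← hsum]
      rw [inner_add_right, hxs₁, zero_add]
    _ = ⟪S₂.starProjection x, s₂⟫ := by
      rw [← sub_eq_zero, ← inner_sub_left, starProjection_inner_eq_zero x s₂ hs₂]
    _ ≤ _ := real_inner_le_norm _ _
  have hsplit : ‖x - S₂.starProjection x‖ ^ 2 = ‖x‖ ^ 2 - ‖S₂.starProjection x‖ ^ 2 := by
    rw [← starProjection_orthogonal_val, norm_sq_eq_add_norm_sq_starProjection x S₂]; ring
  have hs₂_sq : (1 - c ^ 2) * ‖s₂‖ ^ 2 ≤ ‖x‖ ^ 2 := by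
    nlinarith [mul_self_le_mul_self (norm_nonneg _) hs₁_le]
  have hx_pow_four : ‖x‖ ^ 2 * ‖x‖ ^ 2 ≤ ‖S₂.starProjection x‖ ^ 2 * ‖s₂‖ ^ 2 := by
    nlinarith [mul_self_le_mul_self (sq_nonneg ‖x‖) hx_sq]
  have hproj : (1 - c ^ 2) * ‖x‖ ^ 2 ≤ ‖S₂.starProjection x‖ ^ 2 := by
    rcases le_or_gt (1 - c ^ 2) 0 with hc₁ | hc₁
    · nlinarith
    rcases (norm_nonneg s₂).eq_or_lt with hb | hb
    · nlinarith
    · refine le_of_mul_le_mul_right ?_ (pow_pos hb 2)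
      nlinarith [mul_le_mul_of_nonneg_left hs₂_sq (sq_nonneg ‖x‖)]
  rw [← pow_le_pow_iff_left₀ (norm_nonneg _) (by positivity) two_ne_zero, hsplit]
  nlinarith

end Submodule

open Submodule in
theorem stmt_17
    {H : Type*} [NormedAddCommGroup H] [InnerProductSpace ℝ H]
    (S₁ S₂ : Submodule ℝ H) [FiniteDimensional ℝ S₁] [FiniteDimensional ℝ S₂]
    (c : ℝ)
    (hc : c = ⨆ p : {x : H // x ∈ S₁ ∧ x ≠ 0} × {y : H // y ∈ S₂ ∧ y ≠ 0},
        |⟪(p.1 : H), (p.2 : H)⟫| / (‖(p.1 : H)‖ * ‖(p.2 : H)‖))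
    (e : H) (he : e ∈ S₁ ⊔ S₂) (heperp : ∀ s ∈ S₂, ⟪e, s⟫ = 0) :
    ‖(e - Submodule.orthogonalProjection S₁ e)
        - Submodule.orthogonalProjection S₂ (e - Submodule.orthogonalProjection S₁ e)‖ ≤ c ^ 2 * ‖e‖ := by
  obtain rfl : c = cosAngle S₁ S₂ := hc
  have hc₀ := cosAngle_nonneg S₁ S₂
  have hc₁₂ : ∀ s₁ ∈ S₁, ∀ s₂ ∈ S₂, |⟪s₁, s₂⟫| ≤ cosAngle S₁ S₂ * (‖s₁‖ * ‖s₂‖) :=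
    fun _ h₁ _ h₂ => abs_inner_le_cosAngle_mul h₁ h₂
  have hc₂₁ : ∀ s₂ ∈ S₂, ∀ s₁ ∈ S₁, |⟪s₂, s₁⟫| ≤ cosAngle S₁ S₂ * (‖s₂‖ * ‖s₁‖) :=
    fun _ h₂ _ h₁ => by rw [real_inner_comm, mul_comm ‖_‖]; exact hc₁₂ _ h₁ _ h₂
  set u := e - S₁.starProjection e
  have hu : ‖u‖ ≤ cosAngle S₁ S₂ * ‖e‖ :=
    norm_sub_starProjection_le_of_mem_sup_orthogonal hc₀ hc₂₁ (sup_comm S₁ S₂ ▸ he)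
      ((mem_orthogonal' S₂ e).2 heperp)
  have huv : ‖u - S₂.starProjection u‖ ≤ cosAngle S₁ S₂ * ‖u‖ :=
    norm_sub_starProjection_le_of_mem_sup_orthogonal hc₀ hc₁₂
      (sub_mem he (mem_sup_left (coe_mem _))) (sub_starProjection_mem_orthogonal e)
  calc ‖u - S₂.starProjection u‖ ≤ cosAngle S₁ S₂ * ‖u‖ := huv
    _ ≤ cosAngle S₁ S₂ * (cosAngle S₁ S₂ * ‖e‖) := mul_le_mul_of_nonneg_left hu hc₀
    _ = cosAngle S₁ S₂ ^ 2 * ‖e‖ := by ring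
end
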